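/- arXiv:2301.04287 — 7 statements merged into one kernel-verified Lean document; each statement's English description precedes it below -/
import Mathlib

section
/- If χ_1 = χ_2 = ⋯ = χ_{n+1}, then |S_n(χ,b) + ((q-1)^n / q)·χ_1(b)| ≤ q^{(n+1)/2}. -/
open Finset

/-- The twisted inverted `n`-variable Kloosterman sum
`S_n(χ,b) = ∑_{x_1⋯x_{n+1}=b, x_1+⋯+x_{n+1}≠0} χ_1(x_1)⋯χ_{n+1}(x_{n+1}) ψ(1/(x_1+⋯+x_{n+1}))`. -/
noncomputable def invKloosSum {F : Type} [Field F] [Fintype F] [DecidableEq F]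
    (ψ : AddChar F ℂ) (n : ℕ) (χ : Fin (n + 1) → (Fˣ →* ℂ)) (b : Fˣ) : ℂ :=
  ∑ x ∈ Finset.univ.filter
      (fun x : Fin (n + 1) → Fˣ => (∏ i, x i) = b ∧ (∑ i, (x i : F)) ≠ 0),
    (∏ i, χ i (x i)) * ψ ((∑ i, (x i : F))⁻¹)

/-! Since all `χ_i` equal `χ`, the sum is `χ(b) T` with `T` the untwisted sum. Expanding
`ψ(1/s)` in multiplicative characters (the coefficients are Gauss sums), detecting
`x_1⋯x_{n+1} = b` by orthogonality of characters, and evaluating the resulting sums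
`∑_x ∏ λ(x_i) μ(∑ x_i)` by additive Fourier analysis gives the exact identity
`q(q-1) T + (q-1)^{n+1} = ∑_λ λ(b⁻¹) ρ(-1) g(ρ)² g(λ)^{n+1}`, where `ρ = λ^{-(n+1)}`.
Its right side has `q - 1` terms, each of absolute value at most `q^{(n+3)/2}` because
`|g(λ)| ≤ √q`. -/

lemma AddChar.map_sum_eq_prod {A M ι : Type*} [AddCommMonoid A] [CommMonoid M]
    (ψ : AddChar A M) (s : Finset ι) (f : ι → A) :
    ψ (∑ i ∈ s, f i) = ∏ i ∈ s, ψ (f i) :=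
  map_prod ψ.toMonoidHom (fun i ↦ Multiplicative.ofAdd (f i)) s

section KloostermanSum

variable {F : Type} [Field F] [Fintype F]

local notation "q" => Fintype.card F

noncomputable instance : Fintype (MulChar F ℂ) := .ofFinite _

lemma card_sub_one_ne_zero : (q : ℂ) - 1 ≠ 0 :=
  sub_ne_zero.2 (Nat.cast_ne_one.2 Fintype.one_lt_card.ne')

lemma norm_gaussSum_le (χ : MulChar F ℂ) {ψ : AddChar F ℂ} (hψ : ψ ≠ 1) :
    ‖gaussSum χ ψ‖ ≤ √q := by
  by_cases hχ : χ = 1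
  · rw [hχ, gaussSum_one_left hψ, norm_neg, norm_one, Real.one_le_sqrt]
    exact_mod_cast Fintype.card_pos
  · have h := gaussSum_mul_gaussSum_eq_card hχ (AddChar.IsPrimitive.of_ne_one hψ)
    rw [← star_gaussSum_eq, RCLike.star_def, Complex.mul_conj, Complex.normSq_eq_norm_sq] at h
    rw [Real.le_sqrt (norm_nonneg _) (Nat.cast_nonneg _)]
    exact (show ‖gaussSum χ ψ‖ ^ 2 = q by exact_mod_cast h).le

variable [DecidableEq F]

lemma MulChar.norm_apply_coe (χ : MulChar F ℂ) (u : Fˣ) : ‖χ u‖ = 1 :=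
  Complex.norm_eq_one_of_mem_rootsOfUnity (χ.apply_mem_rootsOfUnity u)

lemma card_mulChar : Fintype.card (MulChar F ℂ) = q - 1 := by
  rw [← Nat.card_eq_fintype_card, MulChar.card_eq_card_units_of_hasEnoughRootsOfUnity,
    Nat.card_eq_fintype_card, Fintype.card_units]

lemma MulChar.sum_apply_eq_ite (v : F) :
    ∑ χ : MulChar F ℂ, χ v = if v = 1 then (q : ℂ) - 1 else 0 := by
  split_ifs with hv
  · simp [hv, card_mulChar, Nat.cast_sub Fintype.one_lt_card.le]
  · obtain ⟨χ₀, hχ₀⟩ := MulChar.exists_apply_ne_one_of_hasEnoughRootsOfUnity F ℂ hv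
    have hinv : χ₀ v * ∑ χ : MulChar F ℂ, χ v = ∑ χ : MulChar F ℂ, χ v := by
      rw [Finset.mul_sum]
      exact Fintype.sum_bijective (χ₀ * ·) (Group.mulLeft_bijective χ₀) _ _ fun χ ↦ rfl
    by_contra hS
    exact hχ₀ (mul_right_cancel₀ hS (by rw [hinv, one_mul]))

lemma MulChar.sum_eq_ite (χ : MulChar F ℂ) :
    ∑ a, χ a = if χ = 1 then (q : ℂ) - 1 else 0 := by
  split_ifs with hχ
  · simp [hχ, MulChar.sum_one_eq_card_units, Fintype.card_units,
      Nat.cast_sub Fintype.one_lt_card.le]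
  · exact MulChar.sum_eq_zero_of_ne_one hχ

lemma Fintype.sum_eq_add_sum_units {M : Type*} [AddCommMonoid M] (f : F → M) :
    ∑ t, f t = f 0 + ∑ t : Fˣ, f t := by
  rw [Fintype.sum_eq_add_sum_compl 0]
  refine congrArg _ (Eq.trans ?_ (Finset.sum_map univ ⟨_, Units.val_injective⟩ f))
  congr 1
  ext t
  simp only [mem_compl, mem_singleton, mem_map, mem_univ, true_and]
  exact ⟨fun h ↦ ⟨Units.mk0 t h, rfl⟩, fun ⟨u, hu⟩ ↦ hu ▸ u.ne_zero⟩

/- Mathlib's multiplicative characters, the trivial one included, vanish at `0`; this is what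
removes the terms with `∑ x_i = 0` from the Kloosterman sum. -/
lemma sum_gaussSum_mul_apply (ψ : AddChar F ℂ) (s : F) :
    ∑ χ : MulChar F ℂ, gaussSum χ ψ * χ s
      = if s = 0 then 0 else ((q : ℂ) - 1) * ψ s⁻¹ := by
  have hinner (t : F) : ∑ χ : MulChar F ℂ, χ t * ψ t * χ s
      = if t * s = 1 then ψ t * ((q : ℂ) - 1) else 0 := by
    rw [← mul_ite_zero, ← MulChar.sum_apply_eq_ite, Finset.mul_sum]
    exact Finset.sum_congr rfl fun χ _ ↦ by rw [map_mul]; ring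
  simp_rw [gaussSum, Finset.sum_mul]
  rw [Finset.sum_comm]
  simp_rw [hinner]
  split_ifs with hs
  · simp [hs]
  · simp only [mul_eq_one_iff_eq_inv₀ hs, Finset.sum_ite_eq', Finset.mem_univ, if_true]
    ring

lemma sub_one_mul_sum_addChar_inv {α : Type*} (ψ : AddChar F ℂ) (A : Finset α)
    (σ : α → F) :
    ((q : ℂ) - 1) * ∑ x ∈ A with σ x ≠ 0, ψ (σ x)⁻¹
      = ∑ μ : MulChar F ℂ, gaussSum μ ψ * ∑ x ∈ A, μ (σ x) := by
  simp_rw [Finset.mul_sum (s := A)]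
  rw [Finset.sum_comm, Finset.mul_sum, Finset.sum_filter]
  refine Finset.sum_congr rfl fun x _ ↦ ?_
  rw [sum_gaussSum_mul_apply]
  split_ifs <;> simp_all

lemma sub_one_mul_sum_filter_prod_eq {ι : Type*} [Fintype ι] [DecidableEq ι] (b : Fˣ)
    (f : (ι → Fˣ) → ℂ) :
    ((q : ℂ) - 1) * ∑ x with ∏ i, x i = b, f x
      = ∑ χ : MulChar F ℂ, χ ↑b⁻¹ * ∑ x, (∏ i, χ (x i)) * f x := by
  simp_rw [Finset.mul_sum (s := (univ : Finset (ι → Fˣ)))]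
  rw [Finset.sum_comm, Finset.mul_sum, Finset.sum_filter]
  refine Finset.sum_congr rfl fun x _ ↦ ?_
  have hdetect : ∑ χ : MulChar F ℂ, χ ↑b⁻¹ * ∏ i, χ (x i)
      = if ∏ i, x i = b then (q : ℂ) - 1 else 0 := by
    simp_rw [← map_prod, ← map_mul, ← Units.coe_prod, ← Units.val_mul,
      MulChar.sum_apply_eq_ite, Units.val_eq_one, inv_mul_eq_one, eq_comm]
  rw [← ite_zero_mul, ← hdetect, Finset.sum_mul]
  exact Finset.sum_congr rfl fun χ _ ↦ by ring

lemma card_mul_sum_prod_mul_apply_sum {ι : Type*} [Fintype ι] [DecidableEq ι]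
    {ψ : AddChar F ℂ} (hψ : ψ.IsPrimitive) (χ μ : MulChar F ℂ) :
    (q : ℂ) * ∑ x : ι → Fˣ, (∏ i, χ (x i)) * μ (∑ i, (x i : F))
      = ∑ a : F,
          gaussSum μ (ψ.mulShift (-a)) * gaussSum χ (ψ.mulShift a) ^ Fintype.card ι := by
  have hpow (a : F) : gaussSum χ (ψ.mulShift a) ^ Fintype.card ι
      = ∑ x : ι → Fˣ, (∏ i, χ (x i)) * ψ (a * ∑ i, (x i : F)) := by
    rw [gaussSum, Fintype.sum_eq_add_sum_units, MulChar.map_zero, zero_mul, zero_add,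
      ← Finset.card_univ, ← Finset.prod_const, Fintype.prod_sum]
    simp_rw [Finset.mul_sum, AddChar.map_sum_eq_prod, Finset.prod_mul_distrib,
      AddChar.mulShift_apply]
  have horth (x : ι → Fˣ) (s : F) : ∑ a : F, ψ (-a * s) * ψ (a * ∑ i, (x i : F))
      = if s = ∑ i, (x i : F) then (q : ℂ) else 0 := by
    simp_rw [← AddChar.map_add_eq_mul, show ∀ a : F, -a * s + a * ∑ i, (x i : F)
      = a * (∑ i, (x i : F) - s) from fun a ↦ by ring, AddChar.sum_mulShift _ hψ, sub_eq_zero,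
      eq_comm (a := s)]
    split_ifs <;> simp
  calc _ = ∑ x : ι → Fˣ, ∑ s : F, ∑ a : F,
        μ s * ψ (-a * s) * ((∏ i, χ (x i)) * ψ (a * ∑ i, (x i : F))) := by
        rw [Finset.mul_sum]
        refine Finset.sum_congr rfl fun x _ ↦ ?_
        have hfactor (s : F) : ∑ a : F,
            μ s * ψ (-a * s) * ((∏ i, χ (x i)) * ψ (a * ∑ i, (x i : F)))
            = μ s * (∏ i, χ (x i)) * ∑ a : F, ψ (-a * s) * ψ (a * ∑ i, (x i : F)) := by
          rw [Finset.mul_sum]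
          exact Finset.sum_congr rfl fun _ _ ↦ by ring
        simp_rw [hfactor, horth, mul_ite_zero, Finset.sum_ite_eq', Finset.mem_univ, if_true]
        ring
    _ = ∑ a : F, ∑ s : F, ∑ x : ι → Fˣ,
        μ s * ψ (-a * s) * ((∏ i, χ (x i)) * ψ (a * ∑ i, (x i : F))) :=
        (Finset.sum_congr rfl fun _ _ ↦ Finset.sum_comm).trans
          (Finset.sum_comm.trans (Finset.sum_congr rfl fun _ _ ↦ Finset.sum_comm))
    _ = _ := by simp_rw [hpow, gaussSum, AddChar.mulShift_apply, Finset.sum_mul_sum]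

lemma sum_gaussSum_mulShift_neg_mul_pow (ψ : AddChar F ℂ) (χ μ : MulChar F ℂ) (k : ℕ) :
    ∑ a : F, gaussSum μ (ψ.mulShift (-a)) * gaussSum χ (ψ.mulShift a) ^ k
      = (if μ = 1 then (q : ℂ) - 1 else 0) * (if χ = 1 then (q : ℂ) - 1 else 0) ^ k
        + if μ = (χ ^ k)⁻¹ then ((q : ℂ) - 1) * μ (-1) * gaussSum μ ψ * gaussSum χ ψ ^ k
          else 0 := by
  have hunit (u : Fˣ) : gaussSum μ (ψ.mulShift (-u)) * gaussSum χ (ψ.mulShift u) ^ k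
      = μ (-1) * gaussSum μ ψ * gaussSum χ ψ ^ k * (μ * χ ^ k)⁻¹ u := by
    rw [← Units.val_neg, gaussSum_mulShift_eq, gaussSum_mulShift_eq, mul_pow,
      ← MulChar.pow_apply_coe, mul_inv, MulChar.mul_apply, ← inv_pow, Units.val_neg,
      neg_eq_neg_one_mul (u : F), map_mul, MulChar.inv_apply' μ (-1), inv_neg, inv_one]
    ring
  have hsum_units (ρ : MulChar F ℂ) :
      ∑ u : Fˣ, ρ u = if ρ = 1 then (q : ℂ) - 1 else 0 := by
    rw [← MulChar.sum_eq_ite, Fintype.sum_eq_add_sum_units ρ, MulChar.map_zero, zero_add]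
  rw [Fintype.sum_eq_add_sum_units]
  congr 1
  · simp only [neg_zero, AddChar.mulShift_zero, gaussSum, AddChar.one_apply, mul_one,
      MulChar.sum_eq_ite]
  · simp_rw [hunit, ← Finset.mul_sum, hsum_units, inv_eq_one, mul_eq_one_iff_eq_inv,
      mul_ite_zero]
    split_ifs <;> ring

lemma card_mul_sum_gaussSum_mul_sum_prod {ι : Type*} [Fintype ι] [DecidableEq ι]
    {ψ : AddChar F ℂ} (hψ : ψ ≠ 1) (χ : MulChar F ℂ) :
    (q : ℂ) * ∑ μ : MulChar F ℂ,
        gaussSum μ ψ * ∑ x : ι → Fˣ, (∏ i, χ (x i)) * μ (∑ i, (x i : F))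
      = ((q : ℂ) - 1) * (-(if χ = 1 then (q : ℂ) - 1 else 0) ^ Fintype.card ι
          + (χ ^ Fintype.card ι)⁻¹ (-1) * gaussSum (χ ^ Fintype.card ι)⁻¹ ψ ^ 2
            * gaussSum χ ψ ^ Fintype.card ι) := by
  simp_rw [Finset.mul_sum (s := (univ : Finset (MulChar F ℂ))), mul_left_comm (q : ℂ)]
  simp only [card_mul_sum_prod_mul_apply_sum (AddChar.IsPrimitive.of_ne_one hψ),
    sum_gaussSum_mulShift_neg_mul_pow, mul_add, Finset.sum_add_distrib, ite_mul,
    zero_mul, mul_ite_zero, Finset.sum_ite_eq', Finset.mem_univ, if_true, gaussSum_one_left hψ]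
  ring

lemma invKloosSum_const (ψ : AddChar F ℂ) (n : ℕ) (χ₀ : Fˣ →* ℂ) (b : Fˣ) :
    invKloosSum ψ n (fun _ ↦ χ₀) b = χ₀ b * invKloosSum ψ n 1 b := by
  rw [invKloosSum, invKloosSum, Finset.mul_sum]
  refine Finset.sum_congr rfl fun x hx ↦ ?_
  rw [← map_prod, (Finset.mem_filter.1 hx).2.1]
  simp

lemma card_mul_sub_one_mul_invKloosSum_add_pow {ψ : AddChar F ℂ} (hψ : ψ ≠ 1) (n : ℕ)
    (b : Fˣ) :
    (q : ℂ) * ((q : ℂ) - 1) * invKloosSum ψ n 1 b + ((q : ℂ) - 1) ^ (n + 1)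
      = ∑ χ : MulChar F ℂ, χ ↑b⁻¹ * ((χ ^ (n + 1))⁻¹ (-1)
          * gaussSum (χ ^ (n + 1))⁻¹ ψ ^ 2 * gaussSum χ ψ ^ (n + 1)) := by
  have hT : invKloosSum ψ n 1 b
      = ∑ x ∈ univ.filter (fun x : Fin (n + 1) → Fˣ ↦ ∏ i, x i = b)
          with ∑ i, (x i : F) ≠ 0, ψ (∑ i, (x i : F))⁻¹ := by
    simp [invKloosSum, Finset.filter_filter]
  have hdetect (μ : MulChar F ℂ) :=
    sub_one_mul_sum_filter_prod_eq b fun x : Fin (n + 1) → Fˣ ↦ μ (∑ i, (x i : F))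
  have hfourier (χ : MulChar F ℂ) := card_mul_sum_gaussSum_mul_sum_prod (ι := Fin (n + 1)) hψ χ
  rw [Fintype.card_fin] at hfourier
  have htrivial :
      ∑ χ : MulChar F ℂ, χ ↑b⁻¹ * (if χ = 1 then (q : ℂ) - 1 else 0) ^ (n + 1)
        = ((q : ℂ) - 1) ^ (n + 1) := by
    rw [Finset.sum_eq_single 1 (fun χ _ hχ ↦ by simp [hχ]) (by simp), if_pos rfl,
      MulChar.one_apply_coe, one_mul]
  refine mul_left_cancel₀ (card_sub_one_ne_zero (F := F)) ?_
  calc _ = (q : ℂ) * ∑ μ : MulChar F ℂ, gaussSum μ ψ * (((q : ℂ) - 1)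
          * ∑ x ∈ univ.filter (fun x : Fin (n + 1) → Fˣ ↦ ∏ i, x i = b),
              μ (∑ i, (x i : F)))
        + ((q : ℂ) - 1) * ((q : ℂ) - 1) ^ (n + 1) := by
        simp_rw [mul_left_comm _ ((q : ℂ) - 1), ← Finset.mul_sum,
          ← sub_one_mul_sum_addChar_inv, ← hT]
        ring
    _ = ∑ χ : MulChar F ℂ, χ ↑b⁻¹ * ((q : ℂ) * ∑ μ : MulChar F ℂ, gaussSum μ ψ
          * ∑ x : Fin (n + 1) → Fˣ, (∏ i, χ (x i)) * μ (∑ i, (x i : F)))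
        + ((q : ℂ) - 1) * ((q : ℂ) - 1) ^ (n + 1) := by
        simp_rw [hdetect, Finset.mul_sum]
        rw [Finset.sum_comm]
        simp_rw [mul_left_comm]
    _ = _ := by
        simp_rw [hfourier, mul_add, Finset.sum_add_distrib, mul_neg, Finset.sum_neg_distrib,
          mul_left_comm _ ((q : ℂ) - 1), ← Finset.mul_sum, htrivial]
        ring

lemma norm_invKloosSum_one_add_le {ψ : AddChar F ℂ} (hψ : ψ ≠ 1) (n : ℕ) (b : Fˣ) :
    ‖invKloosSum ψ n 1 b + ((q : ℂ) - 1) ^ n / q‖ ≤ √q ^ (n + 1) := by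
  have hq1 : (1 : ℝ) < q := mod_cast Fintype.one_lt_card
  have hqC : (q : ℂ) ≠ 0 := Nat.cast_ne_zero.2 Fintype.card_ne_zero
  have hdiv : invKloosSum ψ n 1 b + ((q : ℂ) - 1) ^ n / q
      = ((q : ℂ) * (q - 1) * invKloosSum ψ n 1 b + ((q : ℂ) - 1) ^ (n + 1))
          / (q * (q - 1)) := by
    field_simp [card_sub_one_ne_zero]
    ring
  have hnorm : ‖(q : ℂ) * (q - 1)‖ = (q : ℝ) * (q - 1) := by
    rw [← Nat.cast_pred Fintype.card_pos, norm_mul, Complex.norm_natCast, Complex.norm_natCast,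
      Nat.cast_pred Fintype.card_pos]
  rw [hdiv, card_mul_sub_one_mul_invKloosSum_add_pow hψ n b, norm_div, hnorm,
    div_le_iff₀ (by nlinarith)]
  calc _ ≤ ∑ _χ : MulChar F ℂ, √q ^ (n + 3) := by
        refine (norm_sum_le _ _).trans (Finset.sum_le_sum fun χ _ ↦ ?_)
        rw [norm_mul, norm_mul, norm_mul, MulChar.norm_apply_coe, ← Units.coe_neg_one,
          MulChar.norm_apply_coe, one_mul, one_mul, norm_pow, norm_pow,
          show n + 3 = 2 + (n + 1) by ring, pow_add √(q : ℝ) 2 (n + 1)]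
        gcongr <;> exact norm_gaussSum_le _ hψ
    _ = _ := by
        rw [Finset.sum_const, Finset.card_univ, card_mulChar, nsmul_eq_mul,
          Nat.cast_pred Fintype.card_pos, show n + 3 = n + 1 + 2 by ring, pow_add,
          Real.sq_sqrt (Nat.cast_nonneg _)]
        ring

end KloostermanSum

theorem stmt0_general (n : ℕ)
    (F : Type) [Field F] [Fintype F] [DecidableEq F]
    (ψ : AddChar F ℂ) (hψ : ∃ a : F, ψ a ≠ 1)
    (χ : Fin (n + 1) → (Fˣ →* ℂ)) (b : Fˣ)
    (hχ : ∀ i j, χ i = χ j) :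
    ‖invKloosSum ψ n χ b
        + (((Fintype.card F : ℂ) - 1) ^ n / (Fintype.card F : ℂ)) * χ 0 b‖
      ≤ (Fintype.card F : ℝ) ^ (((n : ℝ) + 1) / 2) := by
  obtain ⟨a, ha⟩ := hψ
  have hψ1 : ψ ≠ 1 := fun h ↦ ha (by rw [h, AddChar.one_apply])
  have hconst : invKloosSum ψ n χ b = χ 0 b * invKloosSum ψ n 1 b :=
    calc invKloosSum ψ n χ b = invKloosSum ψ n (fun _ ↦ χ 0) b :=
          congrArg (invKloosSum ψ n · b) (funext fun i ↦ hχ i 0)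
      _ = χ 0 b * invKloosSum ψ n 1 b := invKloosSum_const ψ n (χ 0) b
  have hχb : ‖χ 0 b‖ = 1 := ((χ 0).isOfFinOrder (isOfFinOrder_of_finite b)).norm_eq_one
  have hsqrt : √(Fintype.card F : ℝ) ^ (n + 1)
      = (Fintype.card F : ℝ) ^ (((n : ℝ) + 1) / 2) := by
    rw [Real.sqrt_eq_rpow, ← Real.rpow_natCast, ← Real.rpow_mul (Nat.cast_nonneg _)]
    push_cast
    ring_nf
  rw [hconst, mul_comm _ (χ 0 b), ← mul_add, norm_mul, hχb, one_mul, ← hsqrt]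
  exact norm_invKloosSum_one_add_le hψ1 n b

theorem stmt0 (p m n : ℕ) (hp : p.Prime) (hm : 0 < m) (hn : 1 ≤ n)
    (F : Type) [Field F] [Fintype F] [DecidableEq F]
    (hq : Fintype.card F = p ^ m)
    (ψ : AddChar F ℂ) (hψ : ∃ a : F, ψ a ≠ 1)
    (χ : Fin (n + 1) → (Fˣ →* ℂ)) (b : Fˣ)
    (hχ : ∀ i j, χ i = χ j) :
    ‖invKloosSum ψ n χ b
        + (((Fintype.card F : ℂ) - 1) ^ n / (Fintype.card F : ℂ)) * χ 0 b‖
      ≤ (Fintype.card F : ℝ) ^ (((n : ℝ) + 1) / 2) :=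
  stmt0_general n F ψ hψ χ b hχ
end

section
/- If χ_i ≠ χ_j for some i ≠ j (with 1 ≤ i, j ≤ n+1), then |S_n(χ,b)| ≤ q^{(n+1)/2}. -/
/-!
The constraint `∏ xᵢ = b` is detected by orthogonality of the multiplicative characters `η`
of `F`. For each `η`, the remaining sum over `∑ xᵢ ≠ 0` is homogeneous: writing `x = s • y` with
`∑ yᵢ = 1` splits it as the Gauss sum `G((∏ χᵢη)⁻¹, ψ)` times the `(n+1)`-fold Jacobi sum
`J(χ₁η, …, χₙ₊₁η)`. As `χᵢ ≠ χⱼ`, some `χₖη` is nontrivial, and then `q • J` is a product of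
`n + 2` Gauss sums, so `‖J‖ ≤ q ^ (n / 2)`. With `‖G‖ ≤ √q`, averaging over the `q - 1`
characters `η` gives the bound `q ^ ((n + 1) / 2)`.
-/

open Finset

lemma exists_mul_ne_one_of_apply_ne {ι G : Type*} [Group G] {f : ι → G} {i j : ι}
    (h : f i ≠ f j) (g : G) : ∃ k, f k * g ≠ 1 := by
  by_contra! hf
  exact h ((eq_inv_of_mul_eq_one_left (hf i)).trans (eq_inv_of_mul_eq_one_left (hf j)).symm)

namespace MulChar

variable {M : Type*} [CommMonoid M]

lemma prod_apply_of_isUnit {R ι : Type*} [CommMonoidWithZero R] (s : Finset ι)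
    (χ : ι → MulChar M R) {a : M} (ha : IsUnit a) : (∏ i ∈ s, χ i) a = ∏ i ∈ s, χ i a := by
  induction s using Finset.cons_induction with
  | empty => simp [one_apply ha]
  | cons i s hi ih => rw [prod_cons, prod_cons, mul_apply, ih]

lemma norm_apply_coe_s1 {R : Type*} [Finite Mˣ] [NormedCommRing R] [NormMulClass R]
    [NormOneClass R] (χ : MulChar M R) (u : Mˣ) : ‖χ u‖ = 1 :=
  ((χ.toMonoidHom.comp (Units.coeHom M)).isOfFinOrder (isOfFinOrder_of_finite u)).norm_eq_one

lemma sum_pi_units_prod_apply_mul {R ι : Type*} [CommSemiring R] [Fintype M] [DecidableEq M]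
    [Fintype ι] [DecidableEq ι] (χ : ι → MulChar M R) (f : (ι → M) → R) :
    ∑ x : ι → Mˣ, (∏ i, χ i (x i)) * f (fun i => x i) = ∑ x : ι → M, (∏ i, χ i (x i)) * f x := by
  refine Fintype.sum_of_injective (fun (x : ι → Mˣ) i => (x i : M))
    (fun x y h => funext fun i => Units.ext (congrFun h i)) _ _ (fun x hx => ?_) fun _ => rfl
  obtain ⟨i, hi⟩ : ∃ i, ¬IsUnit (x i) := by
    by_contra! hu
    exact hx ⟨fun i => (hu i).unit, funext fun i => (hu i).unit_spec⟩
  rw [prod_eq_zero (mem_univ i) (map_nonunit (χ i) hi), zero_mul]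

variable {R : Type*} [CommRing R] [IsDomain R] [Finite M]
  [HasEnoughRootsOfUnity R (Monoid.exponent Mˣ)] [Fintype (MulChar M R)] [DecidableEq M]

lemma sum_apply_eq_ite_s1 (a : M) :
    ∑ χ : MulChar M R, χ a = if a = 1 then (Nat.card Mˣ : R) else 0 := by
  split_ifs with ha
  · simp [ha, ← card_eq_card_units_of_hasEnoughRootsOfUnity M R, Nat.card_eq_fintype_card]
  · obtain ⟨χ₀, hχ₀⟩ := exists_apply_ne_one_of_hasEnoughRootsOfUnity M R ha
    refine eq_zero_of_mul_eq_self_left hχ₀ ?_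
    rw [mul_sum]
    exact Fintype.sum_equiv (Equiv.mulLeft χ₀) _ _ fun χ => (mul_apply χ₀ χ a).symm

lemma sum_apply_inv_mul_apply (b : Mˣ) (a : M) :
    ∑ χ : MulChar M R, χ ↑b⁻¹ * χ a = if a = b then (Nat.card Mˣ : R) else 0 := by
  simp_rw [← map_mul, sum_apply_eq_ite_s1, Units.inv_mul_eq_one, eq_comm]

end MulChar

namespace MonoidHom

variable {M R : Type*} [CommMonoid M] [CommMonoidWithZero R]

noncomputable def toMulChar (φ : Mˣ →* R) : MulChar M R :=
  MulChar.ofUnitHom φ.toHomUnits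

@[simp]
lemma toMulChar_apply_coe (φ : Mˣ →* R) (u : Mˣ) : φ.toMulChar u = φ u := by
  simp [toMulChar]

lemma toMulChar_injective : Function.Injective (toMulChar : (Mˣ →* R) → MulChar M R) :=
  fun φ φ' h => MonoidHom.ext fun u => by rw [← toMulChar_apply_coe, h, toMulChar_apply_coe]

end MonoidHom

section FiniteField

variable {F R ι : Type*} [Field F] [Fintype F] [CommRing R] [Fintype ι]

lemma norm_gaussSum_le_sqrt_card (χ : MulChar F ℂ) {ψ : AddChar F ℂ} (hψ : ψ ≠ 1) :
    ‖gaussSum χ ψ‖ ≤ √(Fintype.card F) := by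
  by_cases hχ : χ = 1
  · rw [hχ, gaussSum_one_left hψ, norm_neg, norm_one, Real.one_le_sqrt]
    exact_mod_cast Fintype.card_pos
  · have hmul := gaussSum_mul_gaussSum_eq_card hχ (AddChar.IsPrimitive.of_ne_one hψ)
    rw [← star_gaussSum_eq, Complex.star_def, Complex.mul_conj'] at hmul
    refine Real.le_sqrt_of_sq_le (le_of_eq ?_)
    exact_mod_cast hmul

lemma mul_prod_gaussSum_mulShift [IsDomain R] (ψ : AddChar F R) {χ : ι → MulChar F R}
    (hχ : ∃ i, χ i ≠ 1) (a : F) :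
    ψ (-a) * ∏ i, gaussSum (χ i) (ψ.mulShift a)
      = (∏ i, χ i)⁻¹ a * ψ⁻¹ a * ∏ i, gaussSum (χ i) ψ := by
  rcases eq_or_ne a 0 with rfl | ha
  · obtain ⟨i, hi⟩ := hχ
    rw [AddChar.mulShift_zero, prod_eq_zero (mem_univ i) (gaussSum_one_right hi),
      MulChar.map_zero]
    ring
  · have hu : IsUnit a := ha.isUnit
    rw [← hu.unit_spec]
    simp only [gaussSum_mulShift_eq, prod_mul_distrib, ← prod_inv_distrib,
      MulChar.prod_apply_of_isUnit _ _ hu.unit.isUnit, AddChar.inv_apply]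
    ring

variable [DecidableEq F]

lemma sum_mul_ite_inv_eq_gaussSum_inv (χ : MulChar F R) (ψ : AddChar F R) :
    ∑ s, χ s * (if s = 0 then 0 else ψ s⁻¹) = gaussSum χ⁻¹ ψ := by
  calc ∑ s, χ s * (if s = 0 then 0 else ψ s⁻¹)
      = ∑ s, χ s * ψ s⁻¹ := by
        refine sum_congr rfl fun s _ => ?_
        split_ifs with hs
        · rw [hs, MulChar.map_zero, zero_mul, zero_mul]
        · rfl
    _ = gaussSum χ⁻¹ ψ :=
        Fintype.sum_equiv (Equiv.inv F) _ _ fun s => by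
          rw [Equiv.inv_apply, MulChar.inv_apply', inv_inv]

variable [DecidableEq ι]

def multiJacobiSum (χ : ι → MulChar F R) : R :=
  ∑ x : ι → F with ∑ i, x i = 1, ∏ i, χ i (x i)

theorem card_mul_multiJacobiSum [IsDomain R] {ψ : AddChar F R} (hψ : ψ.IsPrimitive)
    {χ : ι → MulChar F R} (hχ : ∃ i, χ i ≠ 1) :
    Fintype.card F * multiJacobiSum χ = gaussSum (∏ i, χ i)⁻¹ ψ⁻¹ * ∏ i, gaussSum (χ i) ψ := by
  calc Fintype.card F * multiJacobiSum χ
      = ∑ x : ι → F, (∏ i, χ i (x i)) * ∑ a : F, ψ (a * (∑ i, x i - 1)) := by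
        rw [multiJacobiSum, sum_filter, mul_sum]
        refine sum_congr rfl fun x _ => ?_
        simp only [AddChar.sum_mulShift _ hψ, sub_eq_zero]
        split_ifs <;> ring
    _ = ∑ a : F, ψ (-a) * ∏ i, gaussSum (χ i) (ψ.mulShift a) := by
        simp_rw [mul_sum]
        rw [sum_comm]
        refine sum_congr rfl fun a _ => ?_
        simp only [gaussSum, prod_univ_sum, Fintype.piFinset_univ, mul_sum]
        refine sum_congr rfl fun x _ => ?_
        rw [mul_sub, mul_one, sub_eq_neg_add, AddChar.map_add_eq_mul, mul_sum,
          AddChar.map_sum_eq_prod, prod_mul_distrib]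
        simp only [AddChar.mulShift_apply]
        ring
    _ = gaussSum (∏ i, χ i)⁻¹ ψ⁻¹ * ∏ i, gaussSum (χ i) ψ := by
        rw [gaussSum, sum_mul]
        exact sum_congr rfl fun a _ => mul_prod_gaussSum_mulShift ψ hχ a

lemma sum_filter_sum_eq_mul_multiJacobiSum (χ : ι → MulChar F R) {s : F} (hs : s ≠ 0) :
    ∑ x : ι → F with ∑ i, x i = s, ∏ i, χ i (x i) = (∏ i, χ i) s * multiJacobiSum χ := by
  rw [multiJacobiSum, mul_sum]
  refine (sum_equiv (Equiv.piCongrRight fun _ => Equiv.mulLeft₀ s hs) (fun y => ?_)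
    (fun y _ => ?_)).symm
  · simp [← mul_sum, hs]
  · simp [MulChar.prod_apply_of_isUnit _ _ hs.isUnit, prod_mul_distrib]

lemma sum_prod_mul_apply_sum_eq_mul_multiJacobiSum (χ : ι → MulChar F R) {g : F → R}
    (hg : g 0 = 0) :
    ∑ x : ι → F, (∏ i, χ i (x i)) * g (∑ i, x i)
      = (∑ s, (∏ i, χ i) s * g s) * multiJacobiSum χ := by
  calc ∑ x : ι → F, (∏ i, χ i (x i)) * g (∑ i, x i)
      = ∑ s, (∑ x : ι → F with ∑ i, x i = s, ∏ i, χ i (x i)) * g s := by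
        rw [← sum_fiberwise univ (fun x : ι → F => ∑ i, x i)]
        refine sum_congr rfl fun s _ => ?_
        rw [sum_mul]
        exact sum_congr rfl fun x hx => by rw [(mem_filter.mp hx).2]
    _ = (∑ s, (∏ i, χ i) s * g s) * multiJacobiSum χ := by
        rw [sum_mul]
        refine sum_congr rfl fun s _ => ?_
        rcases eq_or_ne s 0 with rfl | hs
        · simp [hg]
        · rw [sum_filter_sum_eq_mul_multiJacobiSum χ hs]
          ring

lemma norm_multiJacobiSum_le (χ : ι → MulChar F ℂ) (hχ : ∃ i, χ i ≠ 1) :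
    ‖multiJacobiSum χ‖ ≤ √(Fintype.card F) ^ (Fintype.card ι - 1) := by
  obtain ⟨ψ, hψ⟩ := AddChar.exists_apply_ne_zero.mpr (one_ne_zero : (1 : F) ≠ 0)
  have hψ₁ : ψ ≠ 1 := fun h => hψ (by rw [h, AddChar.one_apply])
  set r := √(Fintype.card F)
  have hr : 0 < r := Real.sqrt_pos.mpr (by exact_mod_cast Fintype.card_pos)
  have key : r ^ 2 * ‖multiJacobiSum χ‖ ≤ r * ∏ _i : ι, r := by
    rw [Real.sq_sqrt (Nat.cast_nonneg _), ← Complex.norm_natCast, ← norm_mul,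
      card_mul_multiJacobiSum (AddChar.IsPrimitive.of_ne_one hψ₁) hχ, norm_mul, norm_prod]
    gcongr with i
    · exact norm_gaussSum_le_sqrt_card _ (inv_ne_one.mpr hψ₁)
    · exact norm_gaussSum_le_sqrt_card _ hψ₁
  obtain ⟨k, hk⟩ := Nat.exists_eq_add_one.mpr (Fintype.card_pos_iff.mpr ⟨hχ.choose⟩)
  have hrhs : r * ∏ _i : ι, r = r ^ 2 * r ^ k := by rw [prod_const, card_univ, hk]; ring
  rw [hrhs] at key
  rw [hk, Nat.add_sub_cancel]
  exact le_of_mul_le_mul_left key (by positivity)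

lemma norm_gaussSum_mul_multiJacobiSum_le {ψ : AddChar F ℂ} (hψ : ψ ≠ 1)
    (χ : ι → MulChar F ℂ) (hχ : ∃ i, χ i ≠ 1) :
    ‖gaussSum (∏ i, χ i)⁻¹ ψ * multiJacobiSum χ‖ ≤ √(Fintype.card F) ^ Fintype.card ι := by
  obtain ⟨k, hk⟩ := Nat.exists_eq_add_one.mpr (Fintype.card_pos_iff.mpr ⟨hχ.choose⟩)
  rw [norm_mul, hk, pow_succ']
  gcongr
  · exact norm_gaussSum_le_sqrt_card _ hψ
  · simpa [hk] using norm_multiJacobiSum_le χ hχ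

end FiniteField

lemma invKloosSum_eq_sum_mulChar {F : Type} [Field F] [Fintype F] [DecidableEq F]
    [Fintype (MulChar F ℂ)] (ψ : AddChar F ℂ) (n : ℕ) (χ : Fin (n + 1) → (Fˣ →* ℂ)) (b : Fˣ) :
    invKloosSum ψ n χ b = (Nat.card Fˣ : ℂ)⁻¹ * ∑ η : MulChar F ℂ, η ↑b⁻¹ *
      (gaussSum (∏ i, (χ i).toMulChar * η)⁻¹ ψ * multiJacobiSum fun i => (χ i).toMulChar * η) := by
  -- `0⁻¹ = 0` and `ψ 0 = 1`, so the condition `∑ xᵢ ≠ 0` has to be kept explicitly in `g`.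
  set g : F → ℂ := fun s => if s = 0 then 0 else ψ s⁻¹ with hg
  have hN : (Nat.card Fˣ : ℂ) ≠ 0 := Nat.cast_ne_zero.mpr Nat.card_pos.ne'
  calc invKloosSum ψ n χ b
      = ∑ x : Fin (n + 1) → Fˣ, (∏ i, (χ i).toMulChar (x i)) *
          ((if ∏ i, (x i : F) = b then 1 else 0) * g (∑ i, (x i : F))) := by
        rw [invKloosSum, sum_filter]
        refine sum_congr rfl fun x _ => ?_
        simp only [MonoidHom.toMulChar_apply_coe, ← Units.coe_prod, Units.val_inj, hg]
        split_ifs <;> simp_all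
    _ = ∑ x : Fin (n + 1) → F, (∏ i, (χ i).toMulChar (x i)) *
          ((if ∏ i, x i = b then 1 else 0) * g (∑ i, x i)) :=
        MulChar.sum_pi_units_prod_apply_mul (fun i => (χ i).toMulChar)
          (fun x => (if ∏ i, x i = b then 1 else 0) * g (∑ i, x i))
    _ = ∑ x : Fin (n + 1) → F, (∏ i, (χ i).toMulChar (x i)) *
          (((Nat.card Fˣ : ℂ)⁻¹ * ∑ η : MulChar F ℂ, η ↑b⁻¹ * η (∏ i, x i)) * g (∑ i, x i)) := by
        simp only [MulChar.sum_apply_inv_mul_apply, mul_ite, mul_zero, inv_mul_cancel₀ hN]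
    _ = (Nat.card Fˣ : ℂ)⁻¹ * ∑ η : MulChar F ℂ, η ↑b⁻¹ *
          ∑ x : Fin (n + 1) → F, (∏ i, ((χ i).toMulChar * η) (x i)) * g (∑ i, x i) := by
        simp_rw [mul_sum, sum_mul, mul_sum]
        rw [sum_comm]
        refine sum_congr rfl fun η _ => sum_congr rfl fun x _ => ?_
        simp only [MulChar.mul_apply, prod_mul_distrib, map_prod]
        ring
    _ = _ := by
        refine congrArg _ (sum_congr rfl fun η _ => ?_)
        rw [sum_prod_mul_apply_sum_eq_mul_multiJacobiSum (fun i => (χ i).toMulChar * η)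
          (if_pos rfl), sum_mul_ite_inv_eq_gaussSum_inv]

theorem stmt1_general (n : ℕ)
    (F : Type) [Field F] [Fintype F] [DecidableEq F]
    (ψ : AddChar F ℂ) (hψ : ∃ a : F, ψ a ≠ 1)
    (χ : Fin (n + 1) → (Fˣ →* ℂ)) (b : Fˣ)
    (hχ : ∃ i j, i ≠ j ∧ χ i ≠ χ j) :
    ‖invKloosSum ψ n χ b‖
      ≤ (Fintype.card F : ℝ) ^ (((n : ℝ) + 1) / 2) := by
  have := Fintype.ofFinite (MulChar F ℂ)
  obtain ⟨i, j, -, hij⟩ := hχ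
  have hψ₁ : ψ ≠ 1 := fun h => hψ.elim fun a ha => ha (by rw [h, AddChar.one_apply])
  have hN : (0 : ℝ) < Nat.card Fˣ := Nat.cast_pos.mpr Nat.card_pos
  have hterm (η : MulChar F ℂ) : ‖η ↑b⁻¹ * (gaussSum (∏ k, (χ k).toMulChar * η)⁻¹ ψ *
      multiJacobiSum fun k => (χ k).toMulChar * η)‖ ≤ √(Fintype.card F) ^ (n + 1) := by
    rw [norm_mul, MulChar.norm_apply_coe_s1, one_mul]
    simpa using norm_gaussSum_mul_multiJacobiSum_le hψ₁ _ (exists_mul_ne_one_of_apply_ne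
      (f := fun k => (χ k).toMulChar) (MonoidHom.toMulChar_injective.ne hij) η)
  calc ‖invKloosSum ψ n χ b‖
      ≤ (Nat.card Fˣ : ℝ)⁻¹ * ∑ _η : MulChar F ℂ, √(Fintype.card F) ^ (n + 1) := by
        rw [invKloosSum_eq_sum_mulChar, norm_mul, norm_inv, Complex.norm_natCast]
        gcongr
        exact (norm_sum_le _ _).trans (sum_le_sum fun η _ => hterm η)
    _ = (Fintype.card F : ℝ) ^ (((n : ℝ) + 1) / 2) := by
        rw [sum_const, card_univ, ← Nat.card_eq_fintype_card,
          MulChar.card_eq_card_units_of_hasEnoughRootsOfUnity, nsmul_eq_mul,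
          inv_mul_cancel_left₀ hN.ne', Real.sqrt_eq_rpow, ← Real.rpow_natCast,
          ← Real.rpow_mul (Nat.cast_nonneg _)]
        push_cast
        ring_nf

theorem stmt1 (p m n : ℕ) (hp : p.Prime) (hm : 0 < m) (hn : 1 ≤ n)
    (F : Type) [Field F] [Fintype F] [DecidableEq F]
    (hq : Fintype.card F = p ^ m)
    (ψ : AddChar F ℂ) (hψ : ∃ a : F, ψ a ≠ 1)
    (χ : Fin (n + 1) → (Fˣ →* ℂ)) (b : Fˣ)
    (hχ : ∃ i j, i ≠ j ∧ χ i ≠ χ j) :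
    ‖invKloosSum ψ n χ b‖
      ≤ (Fintype.card F : ℝ) ^ (((n : ℝ) + 1) / 2) :=
  stmt1_general n F ψ hψ χ b hχ
end

section
/- For every integer k ≥ 1, q^k · S_{k,n}(b) = −(q^k − 1)^n + S_k*(f), as complex numbers. -/
/-!
Write `A(x) = x_1 + ⋯ + x_n + b/(x_1⋯x_n)` and `χ = ψ ∘ Tr`, a nontrivial additive character of
`F_{q^k}`. For fixed `x` the inner sum over `x_{n+1}` of `χ(x_{n+1}(1 - x_{n+2} A(x)))` is `q^k - 1`
when `x_{n+2} A(x) = 1` and `-1` otherwise, so summing `χ(x_{n+2})` against it leaves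
`q^k χ(A(x)⁻¹) + 1` when `A(x) ≠ 0` and `1` when `A(x) = 0`. Summing over the `(q^k - 1)^n`
points `x` gives the identity.
-/

open Finset

/-- The untwisted inverted `n`-variable Kloosterman sum over the extension `E` of `F`. -/
noncomputable def invKloosSumExt (F : Type) [Field F] (E : Type) [Field E] [Fintype E]
    [DecidableEq E] [Algebra F E] (ψ : AddChar F ℂ) (n : ℕ) (b : Fˣ) : ℂ :=
  ∑ x ∈ Finset.univ.filter
      (fun x : Fin n → Eˣ =>
        (∑ i, (x i : E)) + algebraMap F E (b : F) / (∏ i, (x i : E)) ≠ 0),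
    ψ (Algebra.trace F E
      (((∑ i, (x i : E)) + algebraMap F E (b : F) / (∏ i, (x i : E)))⁻¹))

/-- The toric exponential sum
`S_k*(f) = ∑_{(x_1,…,x_{n+2}) ∈ (Eˣ)^{n+2}}
  ψ(Tr(x_{n+2} + x_{n+1}(1 − x_{n+2}(x_1+⋯+x_n + b/(x_1⋯x_n)))))`,
where `y` plays the role of `x_{n+1}` and `z` that of `x_{n+2}`. -/
noncomputable def toricSumExt (F : Type) [Field F] (E : Type) [Field E] [Fintype E]
    [DecidableEq E] [Algebra F E] (ψ : AddChar F ℂ) (n : ℕ) (b : Fˣ) : ℂ :=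
  ∑ x : Fin n → Eˣ, ∑ y : Eˣ, ∑ z : Eˣ,
    ψ (Algebra.trace F E
      ((z : E) + (y : E) * (1 - (z : E) *
        ((∑ i, (x i : E)) + algebraMap F E (b : F) / (∏ i, (x i : E))))))

section CharacterSums

variable {E R : Type*} [Field E] [Fintype E] [DecidableEq E] [CommRing R]

lemma Fintype.sum_units_eq_sum_sub_zero (g : E → R) :
    ∑ z : Eˣ, g z = ∑ e, g e - g 0 := by
  rw [eq_sub_iff_add_eq, ← sum_erase_add _ _ (mem_univ (0 : E)),
    sum_subtype (univ.erase 0) (p := (· ≠ 0)) (by simp)]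
  exact congrArg (· + g 0) (Fintype.sum_equiv unitsEquivNeZero _ _ fun _ => rfl)

lemma Fintype.sum_units_ite_mul_eq_one (g : E → R) (a : E) :
    ∑ z : Eˣ, (if (z : E) * a = 1 then g z else 0) = if a = 0 then 0 else g a⁻¹ := by
  rcases eq_or_ne a 0 with rfl | ha
  · simp
  · rw [Fintype.sum_units_eq_sum_sub_zero (fun e => if e * a = 1 then g e else 0)]
    simp_rw [mul_eq_one_iff_eq_inv₀ ha]
    simp [ha, ha.symm]

variable [IsDomain R]

lemma AddChar.sum_units_eq_neg_one {χ : AddChar E R} (hχ : χ ≠ 1) :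
    ∑ z : Eˣ, χ z = -1 := by
  rw [Fintype.sum_units_eq_sum_sub_zero, AddChar.sum_eq_zero_of_ne_one hχ, map_zero_eq_one,
    zero_sub]

lemma AddChar.sum_units_mul {χ : AddChar E R} (hχ : χ ≠ 1) (c : E) :
    ∑ y : Eˣ, χ (y * c) = if c = 0 then (Fintype.card Eˣ : R) else -1 := by
  rcases eq_or_ne c 0 with rfl | hc
  · simp
  · rw [if_neg hc, ← χ.sum_units_eq_neg_one hχ]
    exact Fintype.sum_equiv (Equiv.mulRight (Units.mk0 c hc)) _ _ fun _ => rfl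

lemma AddChar.sum_units_sum_units_add_mul_sub {χ : AddChar E R} (hχ : χ ≠ 1) (a : E) :
    ∑ y : Eˣ, ∑ z : Eˣ, χ (z + y * (1 - z * a))
      = Fintype.card E * (if a = 0 then 0 else χ a⁻¹) + 1 := by
  have inner (z : Eˣ) : ∑ y : Eˣ, χ (z + y * (1 - z * a))
      = Fintype.card E * (if (z : E) * a = 1 then χ z else 0) - χ z := by
    simp_rw [map_add_eq_mul, ← mul_sum, χ.sum_units_mul hχ, sub_eq_zero, eq_comm (a := (1 : E)),
      Fintype.card_eq_card_units_add_one (α := E)]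
    split_ifs <;> push_cast <;> ring
  rw [sum_comm, sum_congr rfl fun z _ => inner z, sum_sub_distrib, ← mul_sum,
    Fintype.sum_units_ite_mul_eq_one, χ.sum_units_eq_neg_one hχ, sub_neg_eq_add]

end CharacterSums

lemma AddChar.compAddMonoidHom_trace_ne_one {F E R : Type*} [Field F] [Field E] [Finite E]
    [Algebra F E] [CommMonoid R] {ψ : AddChar F R} (hψ : ψ ≠ 1) :
    ψ.compAddMonoidHom (Algebra.trace F E).toAddMonoidHom ≠ 1 := by
  have := Fintype.ofFinite E
  obtain ⟨a, ha⟩ := AddChar.ne_one_iff.mp hψ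
  obtain ⟨e, rfl⟩ := Algebra.trace_surjective F E a
  exact AddChar.ne_one_iff.mpr ⟨e, ha⟩

theorem stmt7_general (n : ℕ)
    (F : Type) [Field F]
    (ψ : AddChar F ℂ) (hψ : ∃ a : F, ψ a ≠ 1)
    (b : Fˣ)
    (E : Type) [Field E] [Fintype E] [DecidableEq E] [Algebra F E] :
    (Fintype.card E : ℂ) * invKloosSumExt F E ψ n b
      = -((Fintype.card E : ℂ) - 1) ^ n + toricSumExt F E ψ n b := by
  set χ := ψ.compAddMonoidHom (Algebra.trace F E).toAddMonoidHom
  have hχ : χ ≠ 1 := AddChar.compAddMonoidHom_trace_ne_one (AddChar.ne_one_iff.mpr hψ)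
  set A : (Fin n → Eˣ) → E := fun x => (∑ i, (x i : E)) + algebraMap F E b / ∏ i, (x i : E)
  have htoric : toricSumExt F E ψ n b
      = ∑ x, ((Fintype.card E : ℂ) * (if A x = 0 then 0 else χ (A x)⁻¹) + 1) :=
    sum_congr rfl fun x _ => χ.sum_units_sum_units_add_mul_sub hχ (A x)
  have hkloos : invKloosSumExt F E ψ n b = ∑ x, if A x = 0 then 0 else χ (A x)⁻¹ := by
    simp_rw [invKloosSumExt, sum_filter, ite_not]
    rfl
  rw [htoric, hkloos, sum_add_distrib, ← mul_sum, sum_const, card_univ, Fintype.card_fun,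
    Fintype.card_fin, Fintype.card_eq_card_units_add_one (α := E)]
  push_cast
  ring

theorem stmt7 (p m n : ℕ) (hp : p.Prime) (hm : 0 < m) (hn : 1 ≤ n)
    (F : Type) [Field F] [Fintype F]
    (hq : Fintype.card F = p ^ m)
    (ψ : AddChar F ℂ) (hψ : ∃ a : F, ψ a ≠ 1)
    (b : Fˣ)
    (k : ℕ) (hk : 1 ≤ k)
    (E : Type) [Field E] [Fintype E] [DecidableEq E] [Algebra F E]
    (hE : Module.finrank F E = k) :
    (Fintype.card E : ℂ) * invKloosSumExt F E ψ n b
      = -((Fintype.card E : ℂ) - 1) ^ n + toricSumExt F E ψ n b :=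
  stmt7_general n F ψ hψ b E
end

section
/- If χ_1 = χ_2 = ⋯ = χ_{n+1}, then q·S_n(χ,b) = −(q−1)^n·χ_1(b) + χ_1(b)·E_n(χ,b). -/
open Finset

/-- The twisted toric exponential sum
`E_n(χ,b) = ∑_{y,z,x_1,…,x_n ∈ Fˣ} (χ_1 χ_{n+1}⁻¹)(x_1)⋯(χ_n χ_{n+1}⁻¹)(x_n)
  ψ(z + y(1 − z(x_1+⋯+x_n + b/(x_1⋯x_n))))`. -/
noncomputable def twistedToricSum {F : Type} [Field F] [Fintype F] [DecidableEq F]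
    (ψ : AddChar F ℂ) (n : ℕ) (χ : Fin (n + 1) → (Fˣ →* ℂ)) (b : Fˣ) : ℂ :=
  ∑ y : Fˣ, ∑ z : Fˣ, ∑ x : Fin n → Fˣ,
    (∏ i, χ i.castSucc (x i) * (χ (Fin.last n) (x i))⁻¹) *
      ψ ((z : F) + (y : F) *
        (1 - (z : F) * ((∑ i, (x i : F)) + (b : F) / (∏ i, (x i : F)))))


/-!
When all `χᵢ` equal `χ`, the weight in `E_n` is trivial and the weight in `S_n` is `χ(b)` on
the torus `x₁ ⋯ xₙ₊₁ = b`. Eliminating `xₙ₊₁ = b / (x₁ ⋯ xₙ)` turns `x₁ + ⋯ + xₙ₊₁` into the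
Laurent polynomial `T(x) = x₁ + ⋯ + xₙ + b / (x₁ ⋯ xₙ)`. For each `x`, the `y`-sum in `E_n` is
`q·[z T = 1] - 1`, and `∑_{z ∈ Fˣ} ψ(z) = -1`, so `∑_{y,z} ψ(z + y(1 - zT)) = q·ψ(1/T)·[T ≠ 0] + 1`.
Summing over the `(q - 1)ⁿ` points `x` gives `E_n = q·Σ + (q - 1)ⁿ` and `S_n = χ(b)·Σ` with
`Σ = ∑_{T(x) ≠ 0} ψ(1/T(x))`.
-/

lemma sum_units_eq_sum_sub {G₀ M : Type*} [GroupWithZero G₀] [Fintype G₀] [DecidableEq G₀]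
    [AddCommGroup M] (f : G₀ → M) :
    ∑ y : G₀ˣ, f y = ∑ y, f y - f 0 := by
  rw [← sum_erase_eq_sub (mem_univ (0 : G₀)), ← filter_ne' univ (0 : G₀),
    ← sum_subtype_eq_sum_filter, subtype_univ]
  exact Fintype.sum_equiv unitsEquivNeZero (fun y : G₀ˣ => f y) (fun y => f y) fun _ => rfl

lemma sum_units_ite_one_sub_mul_eq_zero {F M : Type*} [Field F] [Fintype F] [DecidableEq F]
    [AddCommMonoid M] (f : F → M) (T : F) :
    ∑ z : Fˣ, (if 1 - z * T = 0 then f z else 0) = if T = 0 then 0 else f T⁻¹ := by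
  split_ifs with hT
  · simp [hT]
  · have hz : ∀ z : Fˣ, 1 - z * T = 0 ↔ z = Units.mk0 T⁻¹ (inv_ne_zero hT) := by
      intro z
      rw [sub_eq_zero, eq_comm, mul_eq_one_iff_eq_inv₀ hT, Units.ext_iff, Units.val_mk0]
    simp_rw [hz, Fintype.sum_ite_eq', Units.val_mk0]

lemma sum_filter_prod_eq_sum_snoc {G β : Type*} [CommGroup G] [Fintype G] [DecidableEq G]
    [AddCommMonoid β] (n : ℕ) (b : G) (g : (Fin (n + 1) → G) → β) :
    ∑ w ∈ univ.filter (fun w : Fin (n + 1) → G => ∏ i, w i = b), g w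
      = ∑ x : Fin n → G, g (Fin.snoc x (b * (∏ i, x i)⁻¹)) := by
  have snoc_init : ∀ w : Fin (n + 1) → G, ∏ i, w i = b →
      Fin.snoc (Fin.init w) (b * (∏ i, Fin.init w i)⁻¹) = w := by
    intro w hw
    rw [← hw, Fin.prod_univ_castSucc]
    exact (congrArg _ (mul_inv_cancel_comm _ _)).trans (Fin.snoc_init_self w)
  refine sum_nbij' Fin.init (fun x => Fin.snoc x (b * (∏ i, x i)⁻¹)) (by simp) ?_ ?_ ?_ ?_
  · intro x _
    simp [Fin.prod_univ_castSucc]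
  · intro w hw
    exact snoc_init w (mem_filter.mp hw).2
  · intro x _
    exact Fin.init_snoc _ _
  · intro w hw
    rw [snoc_init w (mem_filter.mp hw).2]

lemma MonoidHom.mul_inv_cancel₀_apply {G M : Type*} [Group G] [GroupWithZero M]
    (χ : G →* M) (g : G) : χ g * (χ g)⁻¹ = 1 :=
  mul_inv_cancel₀ ((Group.isUnit g).map χ).ne_zero

namespace AddChar

variable {F R : Type*} [Field F] [Fintype F] [DecidableEq F] [CommRing R] [IsDomain R]
  {ψ : AddChar F R}

lemma sum_units_mulShift (hψ : ψ.IsPrimitive) (c : F) :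
    ∑ y : Fˣ, ψ (y * c) = (if c = 0 then (Fintype.card F : R) else 0) - 1 := by
  rw [sum_units_eq_sum_sub fun y => ψ (y * c), sum_mulShift c hψ, zero_mul,
    map_zero_eq_one, Nat.cast_ite, Nat.cast_zero]

lemma sum_units_eq_neg_one_s11 (hψ : ψ.IsPrimitive) : ∑ z : Fˣ, ψ z = -1 := by
  simpa using sum_units_mulShift hψ 1

lemma sum_units_sum_units_add_mul_one_sub_mul (hψ : ψ.IsPrimitive) (T : F) :
    ∑ y : Fˣ, ∑ z : Fˣ, ψ (z + y * (1 - z * T))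
      = Fintype.card F * (if T = 0 then 0 else ψ T⁻¹) + 1 := by
  calc ∑ y : Fˣ, ∑ z : Fˣ, ψ (z + y * (1 - z * T))
      = ∑ z : Fˣ, ψ z * ∑ y : Fˣ, ψ (y * (1 - z * T)) := by
        rw [sum_comm]
        simp_rw [map_add_eq_mul, mul_sum]
    _ = ∑ z : Fˣ, (if 1 - z * T = 0 then (Fintype.card F : R) * ψ z else 0)
          - ∑ z : Fˣ, ψ z := by
        simp_rw [sum_units_mulShift hψ, ← sum_sub_distrib]
        refine sum_congr rfl fun z _ => ?_
        split_ifs <;> ring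
    _ = _ := by
        rw [sum_units_ite_one_sub_mul_eq_zero (fun z => (Fintype.card F : R) * ψ z),
          sum_units_eq_neg_one_s11 hψ, sub_neg_eq_add]
        split_ifs <;> simp

end AddChar

def kloostermanLaurent {F : Type*} [Field F] {n : ℕ} (b : Fˣ) (x : Fin n → Fˣ) : F :=
  ∑ i, (x i : F) + b / ∏ i, (x i : F)

-- The `if` keeps out `T(x) = 0`, where the junk value `0⁻¹ = 0` would contribute `ψ 0 = 1`.
noncomputable def invLaurentSum {F : Type*} [Field F] [Fintype F] [DecidableEq F]
    (ψ : AddChar F ℂ) (n : ℕ) (b : Fˣ) : ℂ :=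
  ∑ x : Fin n → Fˣ, if kloostermanLaurent b x = 0 then 0 else ψ (kloostermanLaurent b x)⁻¹

lemma sum_snoc_eq_kloostermanLaurent {F : Type*} [Field F] {n : ℕ} (b : Fˣ) (x : Fin n → Fˣ) :
    ∑ i, ((Fin.snoc x (b * (∏ i, x i)⁻¹) : Fin (n + 1) → Fˣ) i : F) = kloostermanLaurent b x := by
  simp [Fin.sum_univ_castSucc, kloostermanLaurent, div_eq_mul_inv]

section

variable {F : Type} [Field F] [Fintype F] [DecidableEq F] {ψ : AddChar F ℂ} {n : ℕ}
  {χ : Fin (n + 1) → (Fˣ →* ℂ)}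

lemma twistedToricSum_eq_of_forall_eq_last (hψ : ψ.IsPrimitive)
    (hχ : ∀ i : Fin n, χ i.castSucc = χ (Fin.last n)) (b : Fˣ) :
    twistedToricSum ψ n χ b
      = Fintype.card F * invLaurentSum ψ n b + (Fintype.card F - 1) ^ n := by
  have hcard : (Fintype.card (Fin n → Fˣ) : ℂ) = (Fintype.card F - 1) ^ n := by
    rw [Fintype.card_fun, Fintype.card_units, Fintype.card_fin, Nat.cast_pow,
      Nat.cast_sub Fintype.card_pos, Nat.cast_one]
  calc twistedToricSum ψ n χ b
      = ∑ x : Fin n → Fˣ, ∑ y : Fˣ, ∑ z : Fˣ, ψ (z + y * (1 - z * kloostermanLaurent b x)) := by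
        simp_rw [twistedToricSum, hχ, MonoidHom.mul_inv_cancel₀_apply, prod_const_one, one_mul]
        exact (sum_congr rfl fun y _ => sum_comm).trans sum_comm
    _ = _ := by
        simp_rw [AddChar.sum_units_sum_units_add_mul_one_sub_mul hψ]
        rw [sum_add_distrib, ← mul_sum, sum_const, card_univ, nsmul_one, hcard, invLaurentSum]

lemma invKloosSum_eq_of_forall_eq_zero (hχ : ∀ i, χ i = χ 0) (b : Fˣ) :
    invKloosSum ψ n χ b = χ 0 b * invLaurentSum ψ n b := by
  have hχb : ∀ w ∈ univ.filter (fun w : Fin (n + 1) → Fˣ => ∏ i, w i = b),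
      ∏ i, χ i (w i) = χ 0 b := by
    intro w hw
    simp_rw [hχ, ← map_prod, (mem_filter.mp hw).2]
  rw [invKloosSum, ← filter_filter, sum_filter, sum_congr rfl fun w hw => by rw [hχb w hw],
    sum_filter_prod_eq_sum_snoc, invLaurentSum, mul_sum]
  simp_rw [sum_snoc_eq_kloostermanLaurent, ne_eq, ite_not, mul_ite, mul_zero]

end

theorem stmt11_general (n : ℕ)
    (F : Type) [Field F] [Fintype F] [DecidableEq F]
    (ψ : AddChar F ℂ) (hψ : ∃ a : F, ψ a ≠ 1)
    (χ : Fin (n + 1) → (Fˣ →* ℂ)) (b : Fˣ)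
    (hχ : ∀ i j, χ i = χ j) :
    (Fintype.card F : ℂ) * invKloosSum ψ n χ b
      = -((Fintype.card F : ℂ) - 1) ^ n * χ 0 b
        + χ 0 b * twistedToricSum ψ n χ b := by
  have hprim : ψ.IsPrimitive := AddChar.IsPrimitive.of_ne_one (AddChar.ne_one_iff.mpr hψ)
  rw [invKloosSum_eq_of_forall_eq_zero (fun i => hχ i 0),
    twistedToricSum_eq_of_forall_eq_last hprim (fun i => hχ _ _)]
  ring

theorem stmt11 (p m n : ℕ) (hp : p.Prime) (hm : 0 < m) (hn : 1 ≤ n)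
    (F : Type) [Field F] [Fintype F] [DecidableEq F]
    (hq : Fintype.card F = p ^ m)
    (ψ : AddChar F ℂ) (hψ : ∃ a : F, ψ a ≠ 1)
    (χ : Fin (n + 1) → (Fˣ →* ℂ)) (b : Fˣ)
    (hχ : ∀ i j, χ i = χ j) :
    (Fintype.card F : ℂ) * invKloosSum ψ n χ b
      = -((Fintype.card F : ℂ) - 1) ^ n * χ 0 b
        + χ 0 b * twistedToricSum ψ n χ b :=
  stmt11_general n F ψ hψ χ b hχ
end

section
/- If χ_i ≠ χ_j for some i ≠ j (with 1 ≤ i, j ≤ n+1), then q·S_n(χ,b) = χ_{n+1}(b)·E_n(χ,b). -/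
open Finset

/-!
Write `u(x) = x₁ + ⋯ + xₙ + b / (x₁⋯xₙ)` and `c(x) = ∏ᵢ (χᵢ χₙ₊₁⁻¹)(xᵢ)` for `x ∈ (Fˣ)ⁿ`.
Eliminating `xₙ₊₁ = b / (x₁⋯xₙ)` gives `S = χₙ₊₁(b) ∑ₓ [u(x) ≠ 0] c(x) ψ(1/u(x))`.
In `E`, orthogonality in `y` gives `∑_{y ∈ Fˣ} ψ(yT) = q[T = 0] - 1`, so
`E = q ∑ₓ [u(x) ≠ 0] c(x) ψ(1/u(x)) - (∑ₓ c(x)) (∑_{z ∈ Fˣ} ψ(z))`, and `∑ₓ c(x) = 0`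
because some `χᵢ χₙ₊₁⁻¹` is a nontrivial character.
-/

theorem Fin.exists_castSucc_ne_last {α : Type*} {n : ℕ} {f : Fin (n + 1) → α} {i j : Fin (n + 1)}
    (h : f i ≠ f j) : ∃ k : Fin n, f k.castSucc ≠ f (Fin.last n) := by
  by_contra! hf
  have hlast : ∀ k, f k = f (Fin.last n) := Fin.lastCases rfl hf
  exact h ((hlast i).trans (hlast j).symm)

theorem Fin.sum_filter_prod_eq {G M : Type*} [CommGroup G] [Fintype G] [DecidableEq G]
    [AddCommMonoid M] {n : ℕ} (b : G) (f : (Fin (n + 1) → G) → M) :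
    ∑ x ∈ univ.filter (fun x => ∏ i, x i = b), f x
      = ∑ x : Fin n → G, f (Fin.snoc x (b / ∏ i, x i)) := by
  have hsnoc : ∀ x : Fin (n + 1) → G, ∏ i, x i = b →
      Fin.snoc (Fin.init x) (b / ∏ i, Fin.init x i) = x := fun x hx => by
    rw [← hx, Fin.prod_univ_castSucc]
    simp only [Fin.init, mul_div_cancel_left]
    exact Fin.snoc_init_self x
  refine sum_nbij' Fin.init (fun x => Fin.snoc x (b / ∏ i, x i)) (by simp) ?_
    (fun x hx => hsnoc x (mem_filter.1 hx).2) (fun x _ => Fin.init_snoc _ _)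
    (fun x hx => by rw [hsnoc x (mem_filter.1 hx).2])
  intro x _
  simp [Fin.prod_snoc]

theorem sum_units_eq_sum_sub_apply_zero {G₀ M : Type*} [GroupWithZero G₀] [Fintype G₀]
    [DecidableEq G₀] [AddCommGroup M] (f : G₀ → M) :
    ∑ u : G₀ˣ, f u = ∑ x, f x - f 0 := by
  rw [eq_sub_iff_add_eq, ← sum_erase_add univ f (mem_univ 0),
    ← Fintype.sum_equiv unitsEquivNeZero.symm _ _ (fun _ => rfl)]
  exact congrArg (· + f 0) (sum_subtype _ (by simp) f).symm

theorem MonoidHom.sum_mul_inv_eq_zero_of_ne {G K : Type*} [CommGroup G] [Fintype G] [Field K]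
    {χ χ' : G →* K} (h : χ ≠ χ') : ∑ g, χ g * (χ' g)⁻¹ = 0 := by
  have hχ' : ∀ g, χ' g ≠ 0 := fun g =>
    left_ne_zero_of_mul_eq_one (by rw [← map_mul, mul_inv_cancel, map_one])
  have hquot : χ * χ'.comp invMonoidHom ≠ 1 := fun hquot => h <| MonoidHom.ext fun g => by
    have := DFunLike.congr_fun hquot g
    simp only [MonoidHom.mul_apply, MonoidHom.comp_apply, invMonoidHom_apply, map_inv,
      MonoidHom.one_apply] at this
    exact (mul_inv_eq_one₀ (hχ' g)).1 this
  simpa [map_inv] using sum_hom_units_eq_zero _ hquot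

section FiniteField

variable {F : Type*} [Field F] [Fintype F] [DecidableEq F]

theorem AddChar.sum_units_mulShift_s12 {R : Type*} [CommRing R] [IsDomain R] {ψ : AddChar F R}
    (hψ : ψ.IsPrimitive) (T : F) :
    ∑ y : Fˣ, ψ (y * T) = (if T = 0 then (Fintype.card F : R) else 0) - 1 := by
  rw [sum_units_eq_sum_sub_apply_zero (fun x => ψ (x * T)), AddChar.sum_mulShift T hψ, zero_mul,
    AddChar.map_zero_eq_one, Nat.cast_ite, Nat.cast_zero]

theorem AddChar.sum_units_sum_units_add_mul_one_sub_mul_s12 {R : Type*} [Field R] {ψ : AddChar F R}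
    (hψ : ψ.IsPrimitive) (u : F) :
    ∑ z : Fˣ, ∑ y : Fˣ, ψ (z + y * (1 - z * u))
      = (if u = 0 then 0 else Fintype.card F * ψ u⁻¹) - ∑ z : Fˣ, ψ z := by
  simp_rw [AddChar.map_add_eq_mul, ← mul_sum, AddChar.sum_units_mulShift_s12 hψ, mul_sub, mul_one,
    sum_sub_distrib, mul_ite, mul_zero]
  congr 1
  rcases eq_or_ne u 0 with rfl | hu
  · simp
  · have hcond : ∀ z : Fˣ, 1 - (z : F) * u = 0 ↔ z = Units.mk0 u⁻¹ (inv_ne_zero hu) := by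
      intro z
      rw [Units.ext_iff, Units.val_mk0, sub_eq_zero, eq_comm, mul_eq_one_iff_eq_inv₀ hu]
    simp_rw [hcond, sum_ite_eq', mem_univ, if_true, if_neg hu, Units.val_mk0, mul_comm]

end FiniteField

section Toric

variable {F : Type} [Field F] {n : ℕ}

noncomputable def twistWeight (χ : Fin (n + 1) → (Fˣ →* ℂ)) (x : Fin n → Fˣ) : ℂ :=
  ∏ i, χ i.castSucc (x i) * (χ (Fin.last n) (x i))⁻¹

def laurentPhase (b : Fˣ) (x : Fin n → Fˣ) : F :=
  ∑ i, (x i : F) + b / ∏ i, (x i : F)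

theorem prod_apply_snoc_div_prod (χ : Fin (n + 1) → (Fˣ →* ℂ)) (b : Fˣ) (x : Fin n → Fˣ) :
    ∏ i, χ i ((Fin.snoc x (b / ∏ i, x i) : Fin (n + 1) → Fˣ) i)
      = χ (Fin.last n) b * twistWeight χ x := by
  simp only [Fin.prod_univ_castSucc, Fin.snoc_castSucc, Fin.snoc_last, map_div, map_prod,
    twistWeight, prod_mul_distrib, prod_inv_distrib]
  ring

theorem sum_snoc_div_prod (b : Fˣ) (x : Fin n → Fˣ) :
    ∑ i, ((Fin.snoc x (b / ∏ i, x i) : Fin (n + 1) → Fˣ) i : F) = laurentPhase b x := by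
  simp [Fin.sum_univ_castSucc, laurentPhase]

variable [Fintype F] [DecidableEq F]

noncomputable def reducedKloosSum (ψ : AddChar F ℂ) (χ : Fin (n + 1) → (Fˣ →* ℂ)) (b : Fˣ) : ℂ :=
  ∑ x : Fin n → Fˣ,
    if laurentPhase b x = 0 then 0 else twistWeight χ x * ψ (laurentPhase b x)⁻¹

theorem sum_twistWeight_eq_zero {χ : Fin (n + 1) → (Fˣ →* ℂ)} {i : Fin n}
    (hi : χ i.castSucc ≠ χ (Fin.last n)) : ∑ x, twistWeight χ x = 0 := by
  simp only [twistWeight]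
  rw [← Fintype.prod_sum fun (i : Fin n) (t : Fˣ) => χ i.castSucc t * (χ (Fin.last n) t)⁻¹]
  exact prod_eq_zero (mem_univ i) (MonoidHom.sum_mul_inv_eq_zero_of_ne hi)

theorem invKloosSum_eq (ψ : AddChar F ℂ) (χ : Fin (n + 1) → (Fˣ →* ℂ)) (b : Fˣ) :
    invKloosSum ψ n χ b = χ (Fin.last n) b * reducedKloosSum ψ χ b := by
  rw [invKloosSum, ← filter_filter, sum_filter, Fin.sum_filter_prod_eq, reducedKloosSum, mul_sum]
  refine sum_congr rfl fun x _ => ?_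
  rw [prod_apply_snoc_div_prod, sum_snoc_div_prod]
  simp only [ne_eq, ite_not, mul_ite, mul_zero, mul_assoc]

theorem twistedToricSum_eq {ψ : AddChar F ℂ} (hψ : ψ.IsPrimitive) {χ : Fin (n + 1) → (Fˣ →* ℂ)}
    {i : Fin n} (hi : χ i.castSucc ≠ χ (Fin.last n)) (b : Fˣ) :
    twistedToricSum ψ n χ b = Fintype.card F * reducedKloosSum ψ χ b := by
  calc twistedToricSum ψ n χ b
      = ∑ x, twistWeight χ x * ∑ z : Fˣ, ∑ y : Fˣ, ψ (z + y * (1 - z * laurentPhase b x)) := by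
        simp_rw [mul_sum]
        rw [twistedToricSum, sum_comm, sum_comm_cycle]
        rfl
    _ = _ := by
        simp_rw [AddChar.sum_units_sum_units_add_mul_one_sub_mul_s12 hψ, mul_sub, sum_sub_distrib, ← sum_mul,
          sum_twistWeight_eq_zero hi, zero_mul, sub_zero, reducedKloosSum, mul_sum]
        exact sum_congr rfl fun x _ => by split_ifs <;> ring

end Toric

theorem stmt12_general (n : ℕ)
    (F : Type) [Field F] [Fintype F] [DecidableEq F]
    (ψ : AddChar F ℂ) (hψ : ∃ a : F, ψ a ≠ 1)
    (χ : Fin (n + 1) → (Fˣ →* ℂ)) (b : Fˣ)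
    (hχ : ∃ i j, i ≠ j ∧ χ i ≠ χ j) :
    (Fintype.card F : ℂ) * invKloosSum ψ n χ b
      = χ (Fin.last n) b * twistedToricSum ψ n χ b := by
  obtain ⟨i, j, -, hij⟩ := hχ
  obtain ⟨k, hk⟩ := Fin.exists_castSucc_ne_last hij
  rw [invKloosSum_eq, twistedToricSum_eq (.of_ne_one (AddChar.ne_one_iff.2 hψ)) hk]
  ring

theorem stmt12 (p m n : ℕ) (hp : p.Prime) (hm : 0 < m) (hn : 1 ≤ n)
    (F : Type) [Field F] [Fintype F] [DecidableEq F]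
    (hq : Fintype.card F = p ^ m)
    (ψ : AddChar F ℂ) (hψ : ∃ a : F, ψ a ≠ 1)
    (χ : Fin (n + 1) → (Fˣ →* ℂ)) (b : Fˣ)
    (hχ : ∃ i j, i ≠ j ∧ χ i ≠ χ j) :
    (Fintype.card F : ℂ) * invKloosSum ψ n χ b
      = χ (Fin.last n) b * twistedToricSum ψ n χ b :=
  stmt12_general n F ψ hψ χ b hχ
end

section
/- The determinant of the (n+2)×(n+2) integer matrix M(δ_1) whose columns are V_1, …, V_{n+2} equals −(n+1), and the determinant of the (n+2)×(n+2) integer matrix M(δ_2) whose columns are V_1, …, V_{n+1}, V_{n+3} equals n+1. -/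
/-!
Split the coordinates into the first `n` and the last two. With an arbitrary last column `v`,
the matrix becomes the block matrix `[[1, B], [𝟙, D]]` (`𝟙` all ones), whose determinant is that
of the Schur complement `D - 𝟙 * B = [[n + 1, v_{n+1} - s], [n + 1, v_{n+2} - s]]`, where `s` is
the sum of the first `n` entries of `v`. Hence the determinant is `(n + 1) (v_{n+2} - v_{n+1})`,
which is `-(n + 1)` for `v = e_{n+1}` and `n + 1` for `v = e_{n+2}`.
-/

/-- The lattice points `V_1, …, V_{n+3}` in `ℤ^{n+2}` (0-indexed: `Vlat n j` is `V_{j+1}`):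
`V_i = e_i + e_{n+1} + e_{n+2}` for `1 ≤ i ≤ n`,
`V_{n+1} = −(e_1+⋯+e_n) + e_{n+1} + e_{n+2}`, `V_{n+2} = e_{n+1}`, `V_{n+3} = e_{n+2}`. -/
def Vlat (n : ℕ) (j : Fin (n + 3)) (i : Fin (n + 2)) : ℤ :=
  if (j : ℕ) < n then
    (if (i : ℕ) = (j : ℕ) then 1 else 0) + (if (i : ℕ) = n then 1 else 0) +
      (if (i : ℕ) = n + 1 then 1 else 0)
  else if (j : ℕ) = n then (if (i : ℕ) < n then -1 else 1)
  else if (j : ℕ) = n + 1 then (if (i : ℕ) = n then 1 else 0)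
  else (if (i : ℕ) = n + 1 then 1 else 0)

open Matrix

def vlatMatrix (n : ℕ) (v : Fin (n + 2) → ℤ) : Matrix (Fin (n + 2)) (Fin (n + 2)) ℤ :=
  of fun i j => if (j : ℕ) ≤ n then Vlat n j.castSucc i else v i

lemma vlatMatrix_submatrix_finSumFinEquiv (n : ℕ) (v : Fin (n + 2) → ℤ) :
    (vlatMatrix n v).submatrix finSumFinEquiv finSumFinEquiv =
      fromBlocks 1 (of fun i k => ![-1, v (Fin.castAdd 2 i)] k) (of fun _ _ => 1)
        !![1, v ⟨n, by omega⟩; 1, v ⟨n + 1, by omega⟩] := by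
  ext (i | r) (j | k)
  · have : (i : ℕ) < n := i.isLt
    simp [vlatMatrix, Vlat, one_apply, Fin.ext_iff, this.ne, (this.trans n.lt_succ_self).ne]
  · fin_cases k <;> simp [vlatMatrix, Vlat]
  · have : (j : ℕ) < n := j.isLt
    fin_cases r <;> simp [vlatMatrix, Vlat, this.ne', (this.trans n.lt_succ_self).ne']
  · fin_cases r <;> fin_cases k <;> simp [vlatMatrix, Vlat] <;> rfl

lemma det_vlatMatrix (n : ℕ) (v : Fin (n + 2) → ℤ) :
    (vlatMatrix n v).det = ((n : ℤ) + 1) * (v ⟨n + 1, by omega⟩ - v ⟨n, by omega⟩) := by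
  rw [← det_submatrix_equiv_self finSumFinEquiv, vlatMatrix_submatrix_finSumFinEquiv,
    det_fromBlocks_one₁₁]
  simp only [det_fin_two, Matrix.sub_apply, mul_apply, of_apply, one_mul, cons_val_zero,
    cons_val_one, Finset.sum_neg_distrib, Finset.sum_const, Finset.card_univ, Fintype.card_fin, nsmul_eq_mul]
  ring

theorem stmt14_general (n : ℕ) :
    (Matrix.of fun i j : Fin (n + 2) => Vlat n j.castSucc i).det = -((n : ℤ) + 1) ∧
    (Matrix.of fun i j : Fin (n + 2) =>
        if (j : ℕ) ≤ n then Vlat n j.castSucc i else Vlat n (Fin.last (n + 2)) i).det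
      = (n : ℤ) + 1 := by
  have h_first : (of fun i j : Fin (n + 2) => Vlat n j.castSucc i) =
      vlatMatrix n (Vlat n ⟨n + 1, by omega⟩) := by
    ext i j
    simp only [vlatMatrix, of_apply]
    split_ifs
    · rfl
    · rw [show j = Fin.last (n + 1) from Fin.ext (by rw [Fin.val_last]; omega)]
      rfl
  constructor
  · rw [h_first, det_vlatMatrix]
    simp [Vlat]
  · rw [← vlatMatrix, det_vlatMatrix]
    simp [Vlat]

theorem stmt14 (n : ℕ) (hn : 1 ≤ n) :
    (Matrix.of fun i j : Fin (n + 2) => Vlat n j.castSucc i).det = -((n : ℤ) + 1) ∧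
    (Matrix.of fun i j : Fin (n + 2) =>
        if (j : ℕ) ≤ n then Vlat n j.castSucc i else Vlat n (Fin.last (n + 2)) i).det
      = (n : ℤ) + 1 :=
  stmt14_general n
end

section
/- For every integer k ≥ 0, the number of lattice points of ℤ^{n+2} lying in the dilate k·Δ_1, where Δ_1 is the convex hull of the origin and V_1, …, V_{n+2}, equals Σ_{j=0}^{min(k,n)} C(k−j+n+2, n+2), where C(m, r) denotes the binomial coefficient. -/
/-!
Indices are 0-based, as in `Vpt1`. If `x = ∑ j, μ j • Vpt1 n j`, then with
`h = x (n+1) - ∑_{i<n} x i` one has `μ n = h / (n+1)`, `μ i = x i + μ n` for `i < n`,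
`μ (n+1) = x n - x (n+1)` and `∑ μ = x n`; so `k • Δ₁` is cut out by `n + 3` integral
inequalities. For an integral `x`, write `h = (n+1) q + r` with `0 ≤ r ≤ n`. The integer parts
of the `μ j` (that is `x i + q`, `q`, `x n - x (n+1)`) together with the slack `k - x n` are
natural numbers of total `k - r`, and every such tuple arises from exactly one lattice point.
Hence the lattice points with a given `r ≤ min k n` are counted by the compositions of `k - r`
into `n + 3` parts, `(k - r + n + 2).choose (n + 2)`.
-/

open Finset
open scoped Pointwise

/-- The points `V_1, …, V_{n+2}` in `ℝ^{n+2}` (0-indexed: `Vpt1 n j` is `V_{j+1}`):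
`V_i = e_i + e_{n+1} + e_{n+2}` for `1 ≤ i ≤ n`,
`V_{n+1} = −(e_1+⋯+e_n) + e_{n+1} + e_{n+2}`, `V_{n+2} = e_{n+1}`. -/
def Vpt1 (n : ℕ) (j : Fin (n + 2)) (i : Fin (n + 2)) : ℝ :=
  if (j : ℕ) < n then
    (if (i : ℕ) = (j : ℕ) then 1 else 0) + (if (i : ℕ) = n then 1 else 0) +
      (if (i : ℕ) = n + 1 then 1 else 0)
  else if (j : ℕ) = n then (if (i : ℕ) < n then -1 else 1)
  else (if (i : ℕ) = n then 1 else 0)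

section ConvexHull

variable {𝕜 E ι : Type*} [Field 𝕜] [LinearOrder 𝕜] [IsStrictOrderedRing 𝕜]
  [AddCommGroup E] [Module 𝕜 E] [Fintype ι]

lemma convexHull_insert_zero_range_subset (v : ι → E) :
    convexHull 𝕜 (insert 0 (Set.range v)) ⊆
      {x | ∃ μ : ι → 𝕜, (∀ i, 0 ≤ μ i) ∧ ∑ i, μ i ≤ 1 ∧ ∑ i, μ i • v i = x} := by
  classical
  refine convexHull_min ?_ ?_
  · rintro _ (rfl | ⟨j, rfl⟩)
    · exact ⟨0, fun _ => le_rfl, by simp, by simp⟩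
    · exact ⟨Pi.single j 1, Pi.single_nonneg.2 zero_le_one, by simp,
        by simp [Pi.single_apply, ite_smul]⟩
  · rintro _ ⟨μ, hμ, hμ1, rfl⟩ _ ⟨ν, hν, hν1, rfl⟩ a b ha hb hab
    refine ⟨a • μ + b • ν, fun i => add_nonneg (mul_nonneg ha (hμ i)) (mul_nonneg hb (hν i)),
      ?_, ?_⟩
    · simp only [Pi.add_apply, Pi.smul_apply, smul_eq_mul, sum_add_distrib, ← mul_sum]
      nlinarith
    · simp only [Pi.add_apply, Pi.smul_apply, smul_eq_mul, add_smul, mul_smul, sum_add_distrib,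
        smul_sum]

lemma sum_smul_mem_convexHull_insert_zero_range (v : ι → E) {μ : ι → 𝕜} (hμ : ∀ i, 0 ≤ μ i)
    (hμ1 : ∑ i, μ i ≤ 1) : ∑ i, μ i • v i ∈ convexHull 𝕜 (insert 0 (Set.range v)) :=
  mem_convexHull_of_exists_fintype (fun o : Option ι => o.elim (1 - ∑ i, μ i) μ)
    (fun o : Option ι => o.elim 0 v) (fun o => o.rec (sub_nonneg.2 hμ1) hμ)
    (by simp [Fintype.sum_option])
    (fun o => o.rec (Set.mem_insert _ _) fun i => Set.mem_insert_of_mem _ (Set.mem_range_self i))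
    (by simp [Fintype.sum_option])

theorem mem_smul_convexHull_insert_zero_range_iff (v : ι → E) {t : 𝕜} (ht : 0 ≤ t) {x : E} :
    x ∈ t • convexHull 𝕜 (insert 0 (Set.range v)) ↔
      ∃ μ : ι → 𝕜, (∀ i, 0 ≤ μ i) ∧ ∑ i, μ i ≤ t ∧ ∑ i, μ i • v i = x := by
  constructor
  · rintro ⟨y, hy, rfl⟩
    obtain ⟨μ, hμ, hμ1, rfl⟩ := convexHull_insert_zero_range_subset v hy
    refine ⟨t • μ, fun i => mul_nonneg ht (hμ i), ?_, ?_⟩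
    · simpa [← mul_sum] using mul_le_of_le_one_right ht hμ1
    · simp [smul_sum, mul_smul]
  · rintro ⟨μ, hμ, hμt, rfl⟩
    rcases ht.eq_or_lt with rfl | ht
    · have hμ0 : μ = 0 := funext fun i =>
        (sum_eq_zero_iff_of_nonneg fun i _ => hμ i).1
          (le_antisymm hμt (sum_nonneg fun i _ => hμ i)) i (mem_univ i)
      subst hμ0
      simp
    · refine ⟨∑ i, (μ i / t) • v i, sum_smul_mem_convexHull_insert_zero_range v
        (fun i => div_nonneg (hμ i) ht.le) ?_, ?_⟩
      · rw [← sum_div]; exact (div_le_one ht).2 hμt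
      · simp [smul_sum, smul_smul, mul_div_cancel₀ _ ht.ne']

end ConvexHull

theorem Finset.Nat.card_antidiagonalTuple (k m : ℕ) :
    #(Finset.Nat.antidiagonalTuple k m) = (k + m - 1).choose m := by
  rw [← piAntidiag_univ_fin_eq_antidiagonalTuple, ← map_sym_eq_piAntidiag, card_map, sym_univ,
    card_univ, Sym.card_sym_eq_choose, Fintype.card_fin]

namespace Delta1

section Coordinates

variable {n : ℕ} (μ : Fin (n + 2) → ℝ)

lemma sum_smul_Vpt1_apply_castSucc_castSucc (i : Fin n) :
    (∑ j, μ j • Vpt1 n j) i.castSucc.castSucc =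
      μ i.castSucc.castSucc - μ (Fin.last n).castSucc := by
  have : (i : ℕ) ≠ n + 1 := by omega
  simp [Finset.sum_apply, Fin.sum_univ_castSucc, Vpt1, Fin.val_eq_val, i.isLt.ne, this, sub_eq_add_neg]

lemma sum_smul_Vpt1_apply_castSucc_last :
    (∑ j, μ j • Vpt1 n j) (Fin.last n).castSucc = ∑ j, μ j := by
  have (j : Fin n) : n ≠ j := j.isLt.ne'
  simp [Finset.sum_apply, Fin.sum_univ_castSucc, Vpt1, this]

lemma sum_smul_Vpt1_apply_last :
    (∑ j, μ j • Vpt1 n j) (Fin.last (n + 1)) = ∑ j, μ j - μ (Fin.last (n + 1)) := by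
  have (j : Fin n) : n + 1 ≠ j := by omega
  simp [Finset.sum_apply, Fin.sum_univ_castSucc, Vpt1, this]

end Coordinates

section Facets

variable {R : Type*} {n : ℕ}

def height [AddCommGroup R] (x : Fin (n + 2) → R) : R :=
  x (Fin.last (n + 1)) - ∑ i : Fin n, x i.castSucc.castSucc

/-- For `R = ℝ` and `x = ∑ j, μ j • Vpt1 n j` the four conditions say `0 ≤ μ n`, `0 ≤ μ i`,
`0 ≤ μ (n+1)` and `∑ μ ≤ k`. -/
def ineqSimplex (R : Type*) [Ring R] [LE R] (n : ℕ) (k : R) : Set (Fin (n + 2) → R) :=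
  {x | 0 ≤ height x ∧ (∀ i : Fin n, 0 ≤ (n + 1) * x i.castSucc.castSucc + height x) ∧
    x (Fin.last (n + 1)) ≤ x (Fin.last n).castSucc ∧ x (Fin.last n).castSucc ≤ k}

lemma height_sum_smul_Vpt1 (μ : Fin (n + 2) → ℝ) :
    height (∑ j, μ j • Vpt1 n j) = (n + 1) * μ (Fin.last n).castSucc := by
  simp only [height, sum_smul_Vpt1_apply_last, sum_smul_Vpt1_apply_castSucc_castSucc,
    Fin.sum_univ_castSucc (f := μ), Fin.sum_univ_castSucc (f := fun i => μ i.castSucc),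
    sum_sub_distrib, sum_const, card_univ, Fintype.card_fin, nsmul_eq_mul]
  ring

noncomputable def baryCoords (x : Fin (n + 2) → ℝ) : Fin (n + 2) → ℝ :=
  Fin.snoc (Fin.snoc (fun i => x i.castSucc.castSucc + height x / (n + 1)) (height x / (n + 1)))
    (x (Fin.last n).castSucc - x (Fin.last (n + 1)))

lemma sum_baryCoords (x : Fin (n + 2) → ℝ) : ∑ j, baryCoords x j = x (Fin.last n).castSucc := by
  have hh : (n + 1) * (height x / (n + 1)) =
      x (Fin.last (n + 1)) - ∑ i : Fin n, x i.castSucc.castSucc :=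
    mul_div_cancel₀ _ (by positivity)
  simp only [baryCoords, Fin.sum_univ_castSucc, Fin.snoc_castSucc, Fin.snoc_last,
    sum_add_distrib, sum_const, card_univ, Fintype.card_fin, nsmul_eq_mul]
  linear_combination hh

lemma sum_smul_baryCoords (x : Fin (n + 2) → ℝ) : ∑ j, baryCoords x j • Vpt1 n j = x := by
  funext j
  refine Fin.lastCases ?_ (Fin.lastCases ?_ fun i => ?_) j
  · rw [sum_smul_Vpt1_apply_last, sum_baryCoords]; simp [baryCoords]
  · rw [sum_smul_Vpt1_apply_castSucc_last, sum_baryCoords]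
  · rw [sum_smul_Vpt1_apply_castSucc_castSucc]; simp [baryCoords]

lemma baryCoords_nonneg {k : ℝ} {x : Fin (n + 2) → ℝ} (hx : x ∈ ineqSimplex ℝ n k)
    (j : Fin (n + 2)) : 0 ≤ baryCoords x j := by
  obtain ⟨h0, hi, hlast, -⟩ := hx
  refine Fin.lastCases ?_ (Fin.lastCases ?_ fun i => ?_) j
  · simpa [baryCoords] using hlast
  · simpa [baryCoords] using div_nonneg h0 (by positivity : (0 : ℝ) ≤ n + 1)
  · have h : x i.castSucc.castSucc + height x / (n + 1) =
        ((n + 1) * x i.castSucc.castSucc + height x) / (n + 1) := by field_simp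
    simpa [baryCoords, h] using div_nonneg (hi i) (by positivity : (0 : ℝ) ≤ n + 1)

theorem smul_convexHull_eq_ineqSimplex {k : ℝ} (hk : 0 ≤ k) :
    k • convexHull ℝ (insert (0 : Fin (n + 2) → ℝ) (Set.range (Vpt1 n))) =
      ineqSimplex ℝ n k := by
  ext x
  rw [mem_smul_convexHull_insert_zero_range_iff _ hk]
  constructor
  · rintro ⟨μ, hμ, hμk, rfl⟩
    refine ⟨?_, fun i => ?_, ?_, ?_⟩
    · rw [height_sum_smul_Vpt1]; have := hμ (Fin.last n).castSucc; positivity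
    · rw [height_sum_smul_Vpt1, sum_smul_Vpt1_apply_castSucc_castSucc]
      have := hμ i.castSucc.castSucc; ring_nf; positivity
    · rw [sum_smul_Vpt1_apply_last, sum_smul_Vpt1_apply_castSucc_last]
      linarith [hμ (Fin.last (n + 1))]
    · rwa [sum_smul_Vpt1_apply_castSucc_last]
  · intro hx
    exact ⟨baryCoords x, baryCoords_nonneg hx, (sum_baryCoords x).trans_le hx.2.2.2,
      sum_smul_baryCoords x⟩

lemma intCast_mem_ineqSimplex_iff {k : ℤ} {x : Fin (n + 2) → ℤ} :
    (fun i => (x i : ℝ)) ∈ ineqSimplex ℝ n k ↔ x ∈ ineqSimplex ℤ n k := by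
  simp only [ineqSimplex, height, Set.mem_ofPred_eq]
  norm_cast

end Facets

section LatticePoints

variable {n : ℕ}

/-- The point `(r / (n+1)) • ∑_{j ≤ n} V_j + ∑_{j < n+2} w j • V_j`; the last entry of `w` is
the slack and does not enter. -/
def latticePoint (r : ℤ) (w : Fin (n + 3) → ℤ) : Fin (n + 2) → ℤ :=
  Fin.snoc (Fin.snoc
    (fun i : Fin n => w i.castSucc.castSucc.castSucc - w (Fin.last n).castSucc.castSucc)
    (∑ j : Fin (n + 2), w j.castSucc + r) : Fin (n + 1) → ℤ)
    (∑ j : Fin (n + 1), w j.castSucc.castSucc + r)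

def intCoeffs (k : ℤ) (x : Fin (n + 2) → ℤ) : Fin (n + 3) → ℤ :=
  Fin.snoc (Fin.snoc (Fin.snoc (fun i : Fin n => x i.castSucc.castSucc + height x / (n + 1))
    (height x / (n + 1)) : Fin (n + 1) → ℤ)
    (x (Fin.last n).castSucc - x (Fin.last (n + 1))) : Fin (n + 2) → ℤ)
    (k - x (Fin.last n).castSucc)

lemma height_latticePoint (r : ℤ) (w : Fin (n + 3) → ℤ) :
    height (latticePoint r w) = (n + 1) * w (Fin.last n).castSucc.castSucc + r := by
  simp only [height, latticePoint, Fin.snoc_castSucc, Fin.snoc_last, Fin.sum_univ_castSucc,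
    sum_sub_distrib, sum_const, card_univ, Fintype.card_fin, nsmul_eq_mul]
  ring

lemma latticePoint_intCoeffs (k : ℤ) (x : Fin (n + 2) → ℤ) :
    latticePoint (height x % (n + 1)) (intCoeffs k x) = x := by
  have hdiv : height x % (n + 1) + (n + 1) * (height x / (n + 1)) =
      x (Fin.last (n + 1)) - ∑ i : Fin n, x i.castSucc.castSucc :=
    Int.emod_add_mul_ediv _ _
  funext j
  refine Fin.lastCases ?_ (Fin.lastCases ?_ fun i => by simp [latticePoint, intCoeffs]) j
  all_goals
    simp only [latticePoint, intCoeffs, Fin.snoc_castSucc, Fin.snoc_last, Fin.sum_univ_castSucc,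
      sum_add_distrib, sum_const, card_univ, Fintype.card_fin, nsmul_eq_mul]
    linear_combination hdiv

lemma sum_intCoeffs (k : ℤ) (x : Fin (n + 2) → ℤ) :
    ∑ j, intCoeffs k x j = k - height x % (n + 1) := by
  have hdiv : height x % (n + 1) + (n + 1) * (height x / (n + 1)) =
      x (Fin.last (n + 1)) - ∑ i : Fin n, x i.castSucc.castSucc :=
    Int.emod_add_mul_ediv _ _
  simp only [intCoeffs, Fin.sum_univ_castSucc, Fin.snoc_castSucc, Fin.snoc_last,
    sum_add_distrib, sum_const, card_univ, Fintype.card_fin, nsmul_eq_mul]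
  linear_combination hdiv

lemma intCoeffs_nonneg {k : ℤ} {x : Fin (n + 2) → ℤ} (hx : x ∈ ineqSimplex ℤ n k)
    (j : Fin (n + 3)) : 0 ≤ intCoeffs k x j := by
  obtain ⟨h0, hi, hlast, hk⟩ := hx
  have hq : 0 ≤ height x / (n + 1) := Int.ediv_nonneg h0 (by positivity)
  refine Fin.lastCases ?_ (Fin.lastCases ?_ (Fin.lastCases ?_ fun i => ?_)) j
  · simpa [intCoeffs] using hk
  · simpa [intCoeffs] using hlast
  · simpa [intCoeffs] using hq
  · simp only [intCoeffs, Fin.snoc_castSucc]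
    have hdiv := Int.emod_add_mul_ediv (height x) (n + 1)
    have hr : height x % (n + 1) < n + 1 := Int.emod_lt_of_pos _ (by positivity)
    by_contra! hneg
    -- `x i + q ≤ -1` would force `(n+1) x i + h = (n+1) (x i + q) + r < 0`
    have h := mul_le_mul_of_nonneg_left (Int.le_sub_one_of_lt hneg)
      (by positivity : (0 : ℤ) ≤ n + 1)
    linarith [hi i]

lemma intCoeffs_latticePoint {k r : ℤ} {w : Fin (n + 3) → ℤ} (hr0 : 0 ≤ r) (hr : r < n + 1)
    (hw : ∑ j, w j = k - r) : intCoeffs k (latticePoint r w) = w := by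
  have hq : height (latticePoint r w) / (n + 1) = w (Fin.last n).castSucc.castSucc :=
    ((Int.ediv_emod_unique (by positivity)).2
      ⟨(height_latticePoint r w).symm ▸ by ring, hr0, hr⟩).1
  funext j
  refine Fin.lastCases ?_ (Fin.lastCases ?_ (Fin.lastCases ?_ fun i => ?_)) j
  · simp only [intCoeffs, latticePoint, Fin.snoc_castSucc, Fin.snoc_last]
    rw [Fin.sum_univ_castSucc] at hw
    linarith
  · simp only [intCoeffs, latticePoint, Fin.snoc_castSucc, Fin.snoc_last,
      Fin.sum_univ_castSucc (n := n + 1)]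
    ring
  · simp [intCoeffs, hq]
  · simp only [intCoeffs, Fin.snoc_castSucc, hq]
    simp [latticePoint]

lemma latticePoint_mem_ineqSimplex {k r : ℤ} {w : Fin (n + 3) → ℤ} (hr0 : 0 ≤ r)
    (hw0 : ∀ j, 0 ≤ w j) (hw : ∑ j, w j = k - r) : latticePoint r w ∈ ineqSimplex ℤ n k := by
  refine ⟨?_, fun i => ?_, ?_, ?_⟩
  · rw [height_latticePoint]; have := hw0 (Fin.last n).castSucc.castSucc; positivity
  · rw [height_latticePoint]; have := hw0 i.castSucc.castSucc.castSucc
    simp only [latticePoint, Fin.snoc_castSucc]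
    ring_nf; positivity
  · simp only [latticePoint, Fin.snoc_castSucc, Fin.snoc_last,
      Fin.sum_univ_castSucc (n := n + 1)]
    linarith [hw0 (Fin.last (n + 1)).castSucc]
  · simp only [latticePoint, Fin.snoc_castSucc, Fin.snoc_last]
    rw [Fin.sum_univ_castSucc] at hw
    linarith [hw0 (Fin.last (n + 2))]

end LatticePoints

section Counting

variable (n k : ℕ)

def coeffSet : Finset ((_ : ℕ) × (Fin (n + 3) → ℕ)) :=
  (range (min k n + 1)).sigma fun r => Finset.Nat.antidiagonalTuple (n + 3) (k - r)

lemma mem_coeffSet {p : (_ : ℕ) × (Fin (n + 3) → ℕ)} :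
    p ∈ coeffSet n k ↔ p.1 ≤ n ∧ ∑ j, (p.2 j : ℤ) = k - p.1 := by
  rw [coeffSet, mem_sigma, mem_range, Finset.Nat.mem_antidiagonalTuple, Nat.lt_succ_iff,
    le_min_iff, ← Nat.cast_sum]
  omega

theorem bijOn_latticePoint_coeffSet :
    Set.BijOn (fun p : (_ : ℕ) × (Fin (n + 3) → ℕ) => latticePoint p.1 fun j => p.2 j)
      (coeffSet n k) (ineqSimplex ℤ n k) := by
  have hn : (n : ℤ) + 1 ≠ 0 := by positivity
  refine Set.InvOn.bijOn
    (f' := fun x => ⟨(height x % (n + 1)).toNat, fun j => (intCoeffs k x j).toNat⟩)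
    ⟨fun p hp => ?_, fun x hx => ?_⟩ (fun p hp => ?_) (fun x hx => ?_)
  · obtain ⟨hrn, hsum⟩ := (mem_coeffSet n k).1 hp
    have hr : (p.1 : ℤ) < n + 1 := by omega
    have hrem : height (latticePoint (p.1 : ℤ) fun j => p.2 j) % (n + 1) = p.1 :=
      ((Int.ediv_emod_unique (q := p.2 (Fin.last n).castSucc.castSucc) (by positivity)).2
        ⟨by rw [height_latticePoint]; ring, Nat.cast_nonneg _, hr⟩).2
    refine Sigma.ext ?_ (heq_of_eq ?_)
    · simp [hrem]
    · funext j
      simp [intCoeffs_latticePoint (Nat.cast_nonneg _) hr hsum]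
  · dsimp only
    rw [Int.toNat_of_nonneg (Int.emod_nonneg _ hn)]
    simp only [Int.toNat_of_nonneg (intCoeffs_nonneg hx _)]
    exact latticePoint_intCoeffs k x
  · exact latticePoint_mem_ineqSimplex (Nat.cast_nonneg _) (fun j => Nat.cast_nonneg _)
      ((mem_coeffSet n k).1 hp).2
  · have hr0 : 0 ≤ height x % (n + 1) := Int.emod_nonneg _ hn
    have hr : height x % (n + 1) < n + 1 := Int.emod_lt_of_pos _ (by positivity)
    refine (mem_coeffSet n k).2 ⟨?_, ?_⟩
    · dsimp only; omega
    · simp only [Int.toNat_of_nonneg (intCoeffs_nonneg hx _), Int.toNat_of_nonneg hr0,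
        sum_intCoeffs]

theorem ncard_ineqSimplex :
    (ineqSimplex ℤ n k).ncard = ∑ j ∈ range (min k n + 1), (k - j + n + 2).choose (n + 2) := by
  rw [← (bijOn_latticePoint_coeffSet n k).ncard_eq, Set.ncard_coe_finset, coeffSet, card_sigma]
  refine sum_congr rfl fun j _ => ?_
  rw [Finset.Nat.card_antidiagonalTuple, show n + 3 + (k - j) - 1 = k - j + (n + 2) by omega,
    Nat.choose_symm_add, add_assoc]

end Counting

end Delta1

theorem stmt18_general (n : ℕ) (k : ℕ) :
    Set.ncard {x : Fin (n + 2) → ℤ |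
        (fun i => (x i : ℝ)) ∈
          (k : ℝ) • convexHull ℝ (insert (0 : Fin (n + 2) → ℝ) (Set.range (Vpt1 n)))}
      = ∑ j ∈ Finset.range (min k n + 1), (k - j + n + 2).choose (n + 2) := by
  have hset : {x : Fin (n + 2) → ℤ | (fun i => (x i : ℝ)) ∈
      (k : ℝ) • convexHull ℝ (insert (0 : Fin (n + 2) → ℝ) (Set.range (Vpt1 n)))} =
      Delta1.ineqSimplex ℤ n k := by
    ext x
    rw [Set.mem_ofPred_eq, Delta1.smul_convexHull_eq_ineqSimplex (Nat.cast_nonneg k),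
      ← Delta1.intCast_mem_ineqSimplex_iff, Int.cast_natCast]
  rw [hset, Delta1.ncard_ineqSimplex]

theorem stmt18 (n : ℕ) (hn : 1 ≤ n) (k : ℕ) :
    Set.ncard {x : Fin (n + 2) → ℤ |
        (fun i => (x i : ℝ)) ∈
          (k : ℝ) • convexHull ℝ (insert (0 : Fin (n + 2) → ℝ) (Set.range (Vpt1 n)))}
      = ∑ j ∈ Finset.range (min k n + 1), (k - j + n + 2).choose (n + 2) :=
  stmt18_general n k
end
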